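/- arXiv:0909.0307 — 7 statements merged into one kernel-verified Lean document; each statement's English description precedes it below -/
import Mathlib

section
/- Let n ≥ 1, m ≥ 0, r ≥ 0 be integers with r < n and 2m < 2n + r. Then the following identity holds in the rational numbers: Σ_{ℓ=1}^{n-r} ℓ^m (ℓ+r)^m (2ℓ+r) C(2n, n-ℓ) C(2n, n+ℓ+r) = n · C(2n, n) · C(2n, n-r-1) · Σ_{k=0}^{m} C(n-1, k) · C(n+r+1, k+1) · (k!·(k+1)!/(2n-k)) · α_k(m,n,r). -/
/-!
Put `t = ℓ(ℓ+r)` and expand `t^m` in Newton form at the nodes `u_i = (n-i)(n-i+r)`, `i ≤ m`,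
which are distinct because `u_i - u_j = (j-i)(2n+r-i-j)` and `2m < 2n+r`. As
`t - u_j = (ℓ-n+j)(ℓ+n+r-j)`, the `k`-th Newton basis polynomial turns the weight
`C(2n,n-ℓ) C(2n,n+ℓ+r)` into `(-1)^k ((2n)_k)^2 C(2n-k,n-k-ℓ) C(2n-k,n-r-ℓ)` (falling
factorials), and the sum over `ℓ` of these, weighted by `2ℓ+r`, telescopes by Pascal's rule.
The Newton coefficients, i.e. the divided differences of `x^m` at the nodes, are
`(-1)^k α_k(m,n,r)`.
-/

open Finset

/-- The coefficient `α_k(m,n,r)` from the Newton interpolation: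
`α_k(m,n,r) = Σ_{i=0}^{k} C(2n+r, i) · C(2k-2n-r, k-i) · ((n-i)² + r(n-i))^m · (2n+r-2i) / (2n+r-2k)_{2k+1}`,
where `C(2k-2n-r, k-i)` is the generalized binomial coefficient of the integer `2k-2n-r`
(formalized by `Ring.choose`), and `(a)_{2k+1} = a(a+1)⋯(a+2k)` is the Pochhammer symbol. -/
noncomputable def alphaCoeff (m n r k : ℕ) : ℚ :=
  ∑ i ∈ Finset.range (k + 1),
    ((2 * n + r).choose i : ℚ) *
      ((Ring.choose ((2 * k : ℤ) - 2 * n - r) (k - i) : ℤ) : ℚ) *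
      (((n : ℚ) - i) ^ 2 + (r : ℚ) * ((n : ℚ) - i)) ^ m *
      (2 * (n : ℚ) + r - 2 * i) /
      (∏ j ∈ Finset.range (2 * k + 1), (2 * (n : ℚ) + (r : ℚ) - 2 * k + j))

open Polynomial

section DividedDifference

variable {K : Type*} [Field K]

def divDiff (g : K → K) (u : ℕ → K) (k : ℕ) : K :=
  ∑ i ∈ range (k + 1), g (u i) / ∏ j ∈ (range (k + 1)).erase i, (u i - u j)

lemma sum_Icc_inv_prod_mul_prod_eq_prod_div (u : ℕ → K) (t : K) {i M : ℕ} (hiM : i ≤ M)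
    (hu : Set.InjOn u (range (M + 1))) :
    ∑ k ∈ Icc i M,
        (∏ j ∈ (range (k + 1)).erase i, (u i - u j))⁻¹ * ∏ j ∈ range k, (t - u j) =
      (∏ j ∈ (range (M + 1)).erase i, (t - u j)) /
        ∏ j ∈ (range (M + 1)).erase i, (u i - u j) := by
  induction M, hiM using Nat.le_induction with
  | base =>
    rw [Icc_self, sum_singleton, range_add_one, erase_insert notMem_range_self, inv_mul_eq_div]
  | succ M hiM ih =>
    have hsub : u i - u (M + 1) ≠ 0 :=
      sub_ne_zero.2 fun h ↦ by
        have := hu (by simp; omega) (by simp) h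
        omega
    have hW : ∏ j ∈ (range (M + 1)).erase i, (u i - u j) ≠ 0 :=
      prod_ne_zero_iff.2 fun j hj ↦ sub_ne_zero.2 fun h ↦ by
        obtain ⟨hji, hj⟩ := mem_erase.1 hj
        rw [mem_range] at hj
        exact hji (hu (by simp; omega) (by simp; omega) h).symm
    have herase : (range (M + 1 + 1)).erase i = insert (M + 1) ((range (M + 1)).erase i) := by
      rw [range_add_one, erase_insert_of_ne (by omega)]
    rw [sum_Icc_succ_top (by omega), ih (hu.mono (by simp)), herase, prod_insert (by simp),
      prod_insert (by simp),
      ← mul_prod_erase (range (M + 1)) (fun j ↦ t - u j) (by simp; omega)]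
    field_simp
    ring

theorem eval_eq_sum_divDiff_mul_prod (f : K[X]) (u : ℕ → K) {m : ℕ}
    (hu : Set.InjOn u (range (m + 1))) (hf : f.degree ≤ m) (t : K) :
    f.eval t = ∑ k ∈ range (m + 1), divDiff f.eval u k * ∏ j ∈ range k, (t - u j) := by
  have hlagrange := congrArg (eval t)
    (Lagrange.eq_interpolate hu (hf.trans_lt (by rw [card_range]; exact_mod_cast m.lt_succ_self)))
  rw [hlagrange, Lagrange.interpolate_apply]
  simp only [divDiff, div_eq_mul_inv, sum_mul, mul_assoc]
  rw [sum_comm' (t' := range (m + 1)) (s' := fun i ↦ Icc i m)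
    (fun k i ↦ by simp only [mem_range, mem_Icc]; omega)]
  simp only [← mul_sum, eval_finsetSum, eval_mul, eval_C, Lagrange.basis, eval_prod,
    Lagrange.basisDivisor, eval_sub, eval_X]
  refine sum_congr rfl fun i hi ↦ ?_
  rw [sum_Icc_inv_prod_mul_prod_eq_prod_div u t (by simpa [Nat.lt_succ_iff] using hi) hu,
    ← prod_div_distrib]
  exact congrArg _ (prod_congr rfl fun j _ ↦ by ring)

end DividedDifference

theorem Nat.choose_mul_descFactorial {N a k : ℕ} (hk : k ≤ a) :
    N.choose a * a.descFactorial k = N.descFactorial k * (N - k).choose (a - k) := by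
  rw [descFactorial_eq_factorial_mul_choose, descFactorial_eq_factorial_mul_choose,
    mul_left_comm, choose_mul hk, mul_assoc]

theorem Nat.cast_descFactorial_eq_prod_range {R : Type*} [CommRing R] (M k : ℕ) :
    (M.descFactorial k : R) = ∏ j ∈ range k, ((M : R) - j) := by
  rw [← descPochhammer_eval_eq_descFactorial, descPochhammer_eval_eq_prod_range]

lemma prod_erase_range_natCast_sub {R : Type*} [CommRing R] {i k : ℕ} (hik : i ≤ k) :
    ∏ j ∈ (range (k + 1)).erase i, ((j : R) - i) =
      (-1) ^ i * i.factorial * (k - i).factorial := by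
  induction k, hik using Nat.le_induction with
  | base =>
    rw [range_add_one, erase_insert notMem_range_self, Nat.sub_self, Nat.factorial_zero,
      Nat.cast_one, mul_one, ← Nat.descFactorial_self, Nat.cast_descFactorial_eq_prod_range,
      ← card_range i, ← prod_const, card_range, ← prod_mul_distrib]
    exact prod_congr rfl fun j _ ↦ by ring
  | succ k hik ih =>
    rw [range_add_one, erase_insert_of_ne (by omega), prod_insert (by simp), ih,
      show k + 1 - i = k - i + 1 by omega, Nat.factorial_succ]
    push_cast [Nat.cast_sub hik]
    ring

section Telescoping

variable {R : Type*} [CommRing R]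

lemma sub_mul_choose_eq (N b : ℕ) :
    ((N : R) - b) * N.choose b = N * (N - 1).choose b := by
  rcases N with _ | M
  · rcases b with _ | b <;> simp
  rcases b with _ | b
  · simp
  have habsorb := congrArg (Nat.cast (R := R)) (Nat.add_one_mul_choose_eq M b)
  simp only [Nat.add_sub_cancel, Nat.choose_succ_succ'] at *
  push_cast at *
  linear_combination habsorb

lemma sub_mul_choose_mul_choose_eq (N a b : ℕ) :
    ((N : R) - (a + 1) - (b + 1)) * N.choose (a + 1) * N.choose (b + 1) =
      N * ((N - 1).choose (a + 1) * (N - 1).choose (b + 1) -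
        (N - 1).choose a * (N - 1).choose b) := by
  rcases N with _ | M
  · simp
  have ha := congrArg (Nat.cast (R := R)) (Nat.add_one_mul_choose_eq M a)
  have hb := congrArg (Nat.cast (R := R)) (Nat.add_one_mul_choose_eq M b)
  simp only [Nat.add_sub_cancel, Nat.choose_succ_succ'] at *
  push_cast at *
  linear_combination ((M.choose b : R) + M.choose (b + 1)) * ha
    + ((M.choose a : R) + M.choose (a + 1)) * hb

theorem sum_sub_mul_choose_mul_choose (N a b : ℕ) :
    ∑ j ∈ range (min a b + 1), ((N : R) - a - b + 2 * j) * N.choose (a - j) * N.choose (b - j) =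
      N * (N - 1).choose a * (N - 1).choose b := by
  induction a generalizing b with
  | zero => simp [sub_mul_choose_eq]
  | succ a ih =>
    rcases b with _ | b
    · simpa using sub_mul_choose_eq N (a + 1)
    rw [Nat.add_min_add_right, sum_range_succ']
    have hshift : ∀ x : ℕ, (N : R) - (a + 1) - (b + 1) + 2 * (x + 1) = N - a - b + 2 * x :=
      fun x ↦ by ring
    simp only [Nat.add_sub_add_right, Nat.cast_add, Nat.cast_one, hshift, ih, Nat.cast_zero,
      mul_zero, add_zero, Nat.sub_zero]
    linear_combination sub_mul_choose_mul_choose_eq (R := R) N a b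

end Telescoping

def thetaNode (n r i : ℕ) : ℚ := ((n : ℚ) - i) ^ 2 + r * ((n : ℚ) - i)

lemma thetaNode_sub_thetaNode (n r i j : ℕ) :
    thetaNode n r i - thetaNode n r j = ((j : ℚ) - i) * (2 * n + r - i - j) := by
  unfold thetaNode
  ring

lemma thetaNode_injOn {n r m : ℕ} (hm : 2 * m < 2 * n + r) :
    Set.InjOn (thetaNode n r) (range (m + 1)) := by
  intro i hi j hj hij
  simp only [coe_range, Set.mem_Iio] at hi hj
  have hprod := thetaNode_sub_thetaNode n r i j
  rw [hij, sub_self, eq_comm, mul_eq_zero, sub_eq_zero, sub_sub, sub_eq_zero] at hprod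
  rcases hprod with h | h
  · exact_mod_cast h.symm
  · have hcast : ((2 * n + r : ℕ) : ℚ) = (i + j : ℕ) := by push_cast; linarith
    have : 2 * n + r = i + j := by exact_mod_cast hcast
    omega

lemma prod_mul_add_sub_thetaNode {n ℓ : ℕ} (r k : ℕ) (hℓ : ℓ ≤ n) :
    ∏ j ∈ range k, ((ℓ : ℚ) * (ℓ + r) - thetaNode n r j) =
      (-1) ^ k * (n - ℓ).descFactorial k * (n + ℓ + r).descFactorial k := by
  rw [Nat.cast_descFactorial_eq_prod_range, Nat.cast_descFactorial_eq_prod_range, mul_assoc,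
    ← prod_mul_distrib, ← card_range k, ← prod_const, card_range, ← prod_mul_distrib]
  refine prod_congr rfl fun j _ ↦ ?_
  rw [Nat.cast_sub hℓ, thetaNode]
  push_cast
  ring

lemma choose_mul_descFactorial_mul_choose_mul_descFactorial {n r k ℓ : ℕ} (hk : ℓ + k ≤ n)
    (hr : ℓ + r ≤ n) :
    (2 * n).choose (n - ℓ) * (n - ℓ).descFactorial k *
        ((2 * n).choose (n + ℓ + r) * (n + ℓ + r).descFactorial k) =
      (2 * n).descFactorial k ^ 2 *
        ((2 * n - k).choose (n - k - ℓ) * (2 * n - k).choose (n - r - ℓ)) := by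
  rw [Nat.choose_mul_descFactorial (by omega), Nat.choose_mul_descFactorial (by omega),
    Nat.choose_symm_of_eq_add (show 2 * n - k = (n + ℓ + r - k) + (n - r - ℓ) by omega),
    show n - ℓ - k = n - k - ℓ by omega]
  ring

lemma choose_mul_choose_mul_factorial_eq {n r k : ℕ} (hk : k < n) (hr : r < n) :
    n * (2 * n).choose n * (2 * n).choose (n - r - 1) * ((n - 1).choose k * k.factorial) *
        ((n + r + 1).choose (k + 1) * (k + 1).factorial) =
      ((2 * n).descFactorial k * (2 * n - k)) ^ 2 *
        ((2 * n - k - 1).choose (n - k - 1) * (2 * n - k - 1).choose (n - r - 1)) := by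
  have hn : n * (n - 1).descFactorial k = n.descFactorial (k + 1) := by
    conv_rhs => rw [← Nat.sub_add_cancel (show 1 ≤ n by omega)]
    rw [Nat.succ_descFactorial_succ, Nat.sub_add_cancel (by omega)]
  calc _ = (2 * n).choose n * n.descFactorial (k + 1) *
          ((2 * n).choose (n + r + 1) * (n + r + 1).descFactorial (k + 1)) := by
        rw [← hn, Nat.descFactorial_eq_factorial_mul_choose,
          Nat.descFactorial_eq_factorial_mul_choose,
          Nat.choose_symm_of_eq_add (show 2 * n = (n - r - 1) + (n + r + 1) by omega)]
        ring
    _ = _ := by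
        rw [Nat.choose_mul_descFactorial (by omega), Nat.choose_mul_descFactorial (by omega),
          Nat.choose_symm_of_eq_add
            (show 2 * n - (k + 1) = (n + r + 1 - (k + 1)) + (n - r - 1) by omega),
          Nat.descFactorial_succ, show 2 * n - (k + 1) = 2 * n - k - 1 by omega,
          show n - (k + 1) = n - k - 1 by omega]
        ring

lemma sum_prod_sub_thetaNode_mul_weight_of_lt {n r k : ℕ} (hr : r < n) (hk : k < n) :
    ∑ ℓ ∈ Icc 1 (n - r), (∏ j ∈ range k, ((ℓ : ℚ) * (ℓ + r) - thetaNode n r j)) *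
        ((2 * ℓ + r) * (2 * n).choose (n - ℓ) * (2 * n).choose (n + ℓ + r)) =
      (-1) ^ k * (2 * n).descFactorial k ^ 2 *
        ((2 * n - k : ℕ) * (2 * n - k - 1).choose (n - k - 1) *
          (2 * n - k - 1).choose (n - r - 1)) := by
  set F : ℕ → ℚ := fun ℓ ↦
    (∏ j ∈ range k, ((ℓ : ℚ) * (ℓ + r) - thetaNode n r j)) *
      ((2 * ℓ + r) * (2 * n).choose (n - ℓ) * (2 * n).choose (n + ℓ + r))
  have hF : ∀ ℓ ≤ n, F ℓ = (-1) ^ k * (2 * ℓ + r) *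
      ((2 * n).choose (n - ℓ) * (n - ℓ).descFactorial k *
        ((2 * n).choose (n + ℓ + r) * (n + ℓ + r).descFactorial k) : ℕ) := fun ℓ hℓ ↦ by
    simp only [F, prod_mul_add_sub_thetaNode r k hℓ]
    push_cast
    ring
  have hterm : ∀ j ≤ min (n - k - 1) (n - r - 1),
      F (j + 1) = (-1) ^ k * (2 * n).descFactorial k ^ 2 *
      ((((2 * n - k : ℕ) : ℚ) - (n - k - 1 : ℕ) - (n - r - 1 : ℕ) + 2 * j) *
        (2 * n - k).choose (n - k - 1 - j) * (2 * n - k).choose (n - r - 1 - j)) := fun j hj ↦ by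
    rw [hF _ (by omega),
      choose_mul_descFactorial_mul_choose_mul_descFactorial (by omega) (by omega),
      show n - k - (j + 1) = n - k - 1 - j by omega, show n - r - (j + 1) = n - r - 1 - j by omega]
    push_cast [Nat.sub_sub, show k ≤ 2 * n by omega, show k + 1 ≤ n by omega,
      show r + 1 ≤ n by omega]
    ring
  have hvanish :
      ∀ j ∈ range (n - r), j ∉ range (min (n - k - 1) (n - r - 1) + 1) → F (j + 1) = 0 :=
    fun j hj hj' ↦ by
      simp only [mem_range] at hj hj'
      rw [hF _ (by omega), Nat.descFactorial_of_lt (show n - (j + 1) < k by omega)]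
      simp
  calc ∑ ℓ ∈ Icc 1 (n - r), F ℓ = ∑ j ∈ range (n - r), F (j + 1) := by
        rw [range_eq_Ico, sum_Ico_add', zero_add, Ico_add_one_right_eq_Icc]
    _ = ∑ j ∈ range (min (n - k - 1) (n - r - 1) + 1), F (j + 1) :=
        (sum_subset (range_subset_range.2 (by omega)) hvanish).symm
    _ = _ := by
        rw [sum_congr rfl fun j hj ↦ hterm j (Nat.lt_succ_iff.1 (mem_range.1 hj)), ← mul_sum,
          sum_sub_mul_choose_mul_choose]

theorem sum_prod_sub_thetaNode_mul_weight {n r : ℕ} (hr : r < n) (k : ℕ) :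
    ∑ ℓ ∈ Icc 1 (n - r), (∏ j ∈ range k, ((ℓ : ℚ) * (ℓ + r) - thetaNode n r j)) *
        ((2 * ℓ + r) * (2 * n).choose (n - ℓ) * (2 * n).choose (n + ℓ + r)) =
      (-1) ^ k * ((n : ℚ) * (2 * n).choose n * (2 * n).choose (n - r - 1) *
        ((n - 1).choose k * (n + r + 1).choose (k + 1) *
          ((k.factorial : ℚ) * (k + 1).factorial / (2 * n - k)))) := by
  rcases lt_or_ge k n with hk | hk
  · have hN : ((2 * n - k : ℕ) : ℚ) = 2 * n - k := by
      push_cast [show k ≤ 2 * n by omega]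
      ring
    have hN0 : ((2 * n - k : ℕ) : ℚ) ≠ 0 := Nat.cast_ne_zero.2 (by omega)
    have hcoef := congrArg (Nat.cast (R := ℚ)) (choose_mul_choose_mul_factorial_eq hk hr)
    push_cast [Nat.cast_mul] at hcoef
    rw [sum_prod_sub_thetaNode_mul_weight_of_lt hr hk, ← hN]
    field_simp
    linear_combination -hcoef
  · rw [Nat.choose_eq_zero_of_lt (by omega : n - 1 < k), Nat.cast_zero, zero_mul, zero_mul,
      mul_zero, mul_zero]
    refine sum_eq_zero fun ℓ hℓ ↦ ?_
    rw [mem_Icc] at hℓ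
    rw [prod_mul_add_sub_thetaNode r k (by omega), Nat.descFactorial_of_lt (by omega)]
    simp

lemma ringChoose_two_mul_sub {n r k i : ℕ} (hk : 2 * k < 2 * n + r) (hik : i ≤ k) :
    Ring.choose ((2 * k : ℤ) - 2 * n - r) (k - i) =
      (-1) ^ (k - i) * (2 * n + r - k - i - 1).choose (k - i) := by
  rw [show (2 * k : ℤ) - 2 * n - r = -(2 * n + r - 2 * k) by ring, Ring.choose_neg,
    show (2 * n + r - 2 * k : ℤ) + (k - i : ℕ) - 1 = (2 * n + r - k - i - 1 : ℕ) by omega,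
    Ring.choose_natCast, Units.smul_def, Int.coe_negOnePow_natCast, smul_eq_mul]

lemma prod_range_add_eq_descFactorial {A k : ℕ} (hk : 2 * k ≤ A) :
    ∏ j ∈ range (2 * k + 1), ((A : ℚ) - 2 * k + j) = A.descFactorial (2 * k + 1) := by
  have hasc := Nat.add_descFactorial_eq_ascFactorial' (A - 2 * k) (2 * k + 1)
  rw [show A - 2 * k + (2 * k + 1) - 1 = A by omega] at hasc
  rw [hasc, Nat.ascFactorial_eq_prod_range]
  push_cast [hk]
  rfl

lemma descFactorial_two_mul_add_one_eq (A : ℕ) {i k : ℕ} (hik : i ≤ k) :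
    A.descFactorial (2 * k + 1) =
      A.descFactorial i * (A - i).descFactorial (k + 1) *
        (A - k - i - 1).descFactorial (k - i) := by
  rw [← Nat.descFactorial_mul_descFactorial (show i + k + 1 ≤ 2 * k + 1 by omega),
    ← Nat.descFactorial_mul_descFactorial (show i ≤ i + k + 1 by omega),
    show i + k + 1 - i = k + 1 by omega, show 2 * k + 1 - (i + k + 1) = k - i by omega,
    show A - (i + k + 1) = A - k - i - 1 by omega]
  ring

lemma divDiff_pow_thetaNode (m : ℕ) {n r k : ℕ} (hk : 2 * k < 2 * n + r) :
    divDiff (· ^ m) (thetaNode n r) k = (-1) ^ k * alphaCoeff m n r k := by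
  rw [divDiff, alphaCoeff, mul_sum]
  refine sum_congr rfl fun i hi ↦ ?_
  have hik : i ≤ k := Nat.lt_succ_iff.1 (mem_range.1 hi)
  set E := ∏ j ∈ (range (k + 1)).erase i, (2 * n + r - i - j : ℚ)
  have hW : ∏ j ∈ (range (k + 1)).erase i, (thetaNode n r i - thetaNode n r j) =
      (-1) ^ i * i.factorial * (k - i).factorial * E := by
    simp only [thetaNode_sub_thetaNode, prod_mul_distrib, prod_erase_range_natCast_sub hik, E]
  have hAE : (2 * n + r - 2 * i : ℚ) * E = (2 * n + r - i).descFactorial (k + 1) := by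
    rw [Nat.cast_descFactorial_eq_prod_range, ← mul_prod_erase _ _ hi]
    push_cast [show i ≤ 2 * n + r by omega]
    ring
  have hAE0 : (2 * n + r - 2 * i : ℚ) * E ≠ 0 := by
    rw [hAE, Nat.cast_ne_zero, ← Nat.pos_iff_ne_zero, Nat.descFactorial_pos]
    omega
  -- The Pochhammer denominator of `α_k` splits into the falling factorials that absorb
  -- `C(2n+r,i)`, the node differences `E` and the generalized binomial `C(2k-2n-r,k-i)`.
  have hP : ∏ j ∈ range (2 * k + 1), (2 * n + r - 2 * k + j : ℚ) =
      i.factorial * (2 * n + r).choose i * ((2 * n + r - 2 * i) * E) *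
        ((k - i).factorial * (2 * n + r - k - i - 1).choose (k - i)) := by
    have hprod := prod_range_add_eq_descFactorial hk.le
    push_cast at hprod
    rw [hprod, descFactorial_two_mul_add_one_eq _ hik, hAE,
      Nat.descFactorial_eq_factorial_mul_choose,
      Nat.descFactorial_eq_factorial_mul_choose (2 * n + r - k - i - 1)]
    push_cast
    ring
  have hE : E ≠ 0 := right_ne_zero_of_mul hAE0
  have hC : ((2 * n + r).choose i : ℚ) ≠ 0 := Nat.cast_ne_zero.2 (Nat.choose_pos (by omega)).ne'
  have hC' : ((2 * n + r - k - i - 1).choose (k - i) : ℚ) ≠ 0 :=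
    Nat.cast_ne_zero.2 (Nat.choose_pos (by omega)).ne'
  have hfi : (i.factorial : ℚ) ≠ 0 := Nat.cast_ne_zero.2 i.factorial_ne_zero
  have hfs : ((k - i).factorial : ℚ) ≠ 0 := Nat.cast_ne_zero.2 (k - i).factorial_ne_zero
  have hsign : (-1 : ℚ) ^ k = (-1) ^ i * (-1) ^ (k - i) := by
    rw [← pow_add, Nat.add_sub_cancel' hik]
  have hsq (t : ℕ) : (-1 : ℚ) ^ t * (-1) ^ t = 1 := pow_mul_pow_eq_one t (by norm_num)
  rw [hW, hP, ringChoose_two_mul_sub hk hik, hsign, thetaNode]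
  push_cast
  rw [← mul_div_assoc, div_eq_div_iff
    (mul_ne_zero (mul_ne_zero (mul_ne_zero (pow_ne_zero _ (by norm_num)) hfi) hfs) hE)
    (mul_ne_zero (mul_ne_zero (mul_ne_zero hfi hC) hAE0) (mul_ne_zero hfs hC'))]
  linear_combination (-(((n : ℚ) - i) ^ 2 + r * (n - i)) ^ m * i.factorial *
      (2 * n + r).choose i * (2 * n + r - 2 * i) * E * (k - i).factorial *
      (2 * n + r - k - i - 1).choose (k - i)) *
    ((-1) ^ (k - i) * (-1) ^ (k - i) * hsq i + hsq (k - i))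

theorem theta_formula_general (n m r : ℕ) (hr : r < n) (hm : 2 * m < 2 * n + r) :
    (∑ ℓ ∈ Finset.Icc 1 (n - r),
        (ℓ : ℚ) ^ m * ((ℓ : ℚ) + r) ^ m * (2 * (ℓ : ℚ) + r) *
          ((2 * n).choose (n - ℓ) : ℚ) * ((2 * n).choose (n + ℓ + r) : ℚ))
      = (n : ℚ) * ((2 * n).choose n : ℚ) * ((2 * n).choose (n - r - 1) : ℚ) *
        ∑ k ∈ Finset.range (m + 1),
          ((n - 1).choose k : ℚ) * ((n + r + 1).choose (k + 1) : ℚ) *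
            ((k.factorial : ℚ) * ((k + 1).factorial : ℚ) / (2 * (n : ℚ) - k)) *
            alphaCoeff m n r k := by
  have hnewton (ℓ : ℕ) : ((ℓ : ℚ) * (ℓ + r)) ^ m = ∑ k ∈ range (m + 1),
      divDiff (· ^ m) (thetaNode n r) k *
        ∏ j ∈ range k, ((ℓ : ℚ) * (ℓ + r) - thetaNode n r j) := by
    simpa using eval_eq_sum_divDiff_mul_prod (X ^ m) (thetaNode n r) (thetaNode_injOn hm)
      (degree_X_pow_le m) ((ℓ : ℚ) * (ℓ + r))
  calc _ = ∑ ℓ ∈ Icc 1 (n - r), ∑ k ∈ range (m + 1), divDiff (· ^ m) (thetaNode n r) k *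
        ((∏ j ∈ range k, ((ℓ : ℚ) * (ℓ + r) - thetaNode n r j)) *
          ((2 * ℓ + r) * (2 * n).choose (n - ℓ) * (2 * n).choose (n + ℓ + r))) := by
        refine sum_congr rfl fun ℓ _ ↦ ?_
        simp only [← mul_assoc, ← sum_mul, ← hnewton, mul_pow]
    _ = _ := by
        rw [sum_comm, mul_sum]
        refine sum_congr rfl fun k hk ↦ ?_
        rw [← mul_sum, sum_prod_sub_thetaNode_mul_weight hr,
          divDiff_pow_thetaNode m (by simp at hk; omega)]
        linear_combination (n * (2 * n).choose n * (2 * n).choose (n - r - 1) *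
          ((n - 1).choose k * (n + r + 1).choose (k + 1) *
            ((k.factorial : ℚ) * (k + 1).factorial / (2 * n - k))) * alphaCoeff m n r k) *
          pow_mul_pow_eq_one k (by norm_num : (-1 : ℚ) * -1 = 1)

theorem theta_formula (n m r : ℕ) (hn : 1 ≤ n) (hr : r < n) (hm : 2 * m < 2 * n + r) :
    (∑ ℓ ∈ Finset.Icc 1 (n - r),
        (ℓ : ℚ) ^ m * ((ℓ : ℚ) + r) ^ m * (2 * (ℓ : ℚ) + r) *
          ((2 * n).choose (n - ℓ) : ℚ) * ((2 * n).choose (n + ℓ + r) : ℚ))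
      = (n : ℚ) * ((2 * n).choose n : ℚ) * ((2 * n).choose (n - r - 1) : ℚ) *
        ∑ k ∈ Finset.range (m + 1),
          ((n - 1).choose k : ℚ) * ((n + r + 1).choose (k + 1) : ℚ) *
            ((k.factorial : ℚ) * ((k + 1).factorial : ℚ) / (2 * (n : ℚ) - k)) *
            alphaCoeff m n r k :=
  theta_formula_general n m r hr hm
end

section
/- For all integers n ≥ 1 and r ≥ 1, there exists an odd positive integer t such that 2 · Σ_{k=1}^{n} C(2n, n-k) · k^{2r+1} = t · n² · C(2n, n). In other words, n^{-2} C(2n,n)^{-1} Σ_{k=1}^{n} C(2n, n-k) k^{2r+1} is always half of an odd integer. -/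
open Finset

/-!
Write `S_p(n) = ∑_{k=1}^n C(2n, n-k) k^p`. Since `(n² - k²) C(2n, n-k) = 2n(2n-1) C(2n-2, n-1-k)`,
`S_{p+2}(n) = n² S_p(n) - 2n(2n-1) S_p(n-1)`, and a telescoping sum gives `2 S_1(n) = n C(2n, n)`.
With `2n(2n-1) C(2n-2, n-1) = n² C(2n, n)`, the quotients `c_p(n) = 2 S_p(n) / C(2n, n)` therefore
satisfy `c_1(n) = n` and `c_{p+2}(n) = n² (c_p(n) - c_p(n-1))`, so `c_3(n) = n²` and
`c_{2s+3}(n) = n² T_s(n)` with `T_0 = 1`, `T_{s+1}(n) = n² T_s(n) - (n-1)² T_s(n-1)`.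
As `n²` and `(n-1)²` have opposite parities, every `T_s(n)` is odd.
-/

theorem Nat.add_two_mul_add_one_mul_choose (m j : ℕ) :
    (m + 2) * (m + 1) * m.choose j = (m + 2).choose (j + 1) * ((j + 1) * (m + 1 - j)) := by
  calc (m + 2) * (m + 1) * m.choose j = (m + 2) * (m.choose j * (m + 1)) := by ring
    _ = (m + 1 + 1) * (m + 1).choose j * (m + 1 - j) := by rw [Nat.choose_mul_succ_eq]; ring
    _ = _ := by rw [Nat.add_one_mul_choose_eq]; ring

def binomMoment (n p : ℕ) : ℕ := ∑ k ∈ Icc 1 n, (2 * n).choose (n - k) * k ^ p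

theorem sq_mul_choose_eq {m k : ℕ} (hk : k ≤ m) :
    (m + 1) ^ 2 * (2 * m + 2).choose (m + 1 - k)
      = k ^ 2 * (2 * m + 2).choose (m + 1 - k)
        + (2 * m + 2) * (2 * m + 1) * (2 * m).choose (m - k) := by
  obtain ⟨j, rfl⟩ := Nat.exists_eq_add_of_le hk
  have h := Nat.add_two_mul_add_one_mul_choose (2 * (k + j)) j
  rw [show 2 * (k + j) + 1 - j = 2 * k + j + 1 by omega] at h
  rw [show k + j + 1 - k = j + 1 by omega, Nat.add_sub_cancel_left, h]
  ring

theorem binomMoment_add_two (m p : ℕ) :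
    binomMoment (m + 1) (p + 2) + (2 * m + 2) * (2 * m + 1) * binomMoment m p
      = (m + 1) ^ 2 * binomMoment (m + 1) p := by
  simp only [binomMoment, sum_Icc_succ_top (Nat.le_add_left 1 m), Nat.sub_self,
    Nat.choose_zero_right, show 2 * (m + 1) = 2 * m + 2 by ring]
  rw [mul_add ((m + 1) ^ 2), mul_sum, mul_sum, add_right_comm, ← sum_add_distrib]
  congr 1
  · refine sum_congr rfl fun k hk => ?_
    rw [← mul_assoc ((m + 1) ^ 2), sq_mul_choose_eq (mem_Icc.1 hk).2]
    ring
  · ring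

theorem binomMoment_eq_sum_range (n p : ℕ) :
    binomMoment n p = ∑ j ∈ range n, (2 * n).choose j * (n - j) ^ p := by
  refine sum_nbij' (fun k => n - k) (fun j => n - j) ?_ ?_ ?_ ?_ ?_ <;>
    intro x hx <;> simp only [mem_Icc, mem_range] at hx ⊢
  all_goals first | omega | rw [Nat.sub_sub_self (by omega)]

theorem sum_range_choose_mul_sub {m i : ℕ} (hi : i ≤ m) :
    ∑ j ∈ range (i + 1), (2 * m + 2).choose j * (m + 1 - j) = (m + 1) * (2 * m + 1).choose i := by
  induction i with
  | zero => simp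
  | succ i ih =>
    rw [sum_range_succ, ih (by omega), Nat.choose_succ_succ]
    have h := Nat.choose_succ_right_eq (2 * m + 1) i
    zify [show i ≤ 2 * m + 1 by omega, show i + 1 ≤ m + 1 by omega] at h ⊢
    linear_combination -h

theorem two_mul_binomMoment_one (n : ℕ) : 2 * binomMoment n 1 = n * (2 * n).choose n := by
  rcases n with _ | m
  · simp [binomMoment]
  simp only [binomMoment_eq_sum_range, pow_one, show 2 * (m + 1) = 2 * m + 2 by ring]
  rw [sum_range_choose_mul_sub le_rfl]
  have h := Nat.add_one_mul_choose_eq (2 * m + 1) m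
  rw [show 2 * m + 1 + 1 = 2 * m + 2 by ring] at h
  linear_combination h

theorem two_mul_binomMoment_add_two {p : ℕ} {c : ℕ → ℤ}
    (hc : ∀ n, 2 * (binomMoment n p : ℤ) = c n * (2 * n).choose n) (m : ℕ) :
    2 * (binomMoment (m + 1) (p + 2) : ℤ)
      = (m + 1) ^ 2 * (c (m + 1) - c m) * (2 * (m + 1)).choose (m + 1) := by
  have hrec : (binomMoment (m + 1) (p + 2) : ℤ) + (2 * m + 2) * (2 * m + 1) * binomMoment m p
      = (m + 1) ^ 2 * binomMoment (m + 1) p := by exact_mod_cast binomMoment_add_two m p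
  have hcentral : ((2 * m + 2) * (2 * m + 1) * (2 * m).choose m : ℤ)
      = (m + 1) ^ 2 * (2 * (m + 1)).choose (m + 1) := by
    have h := Nat.succ_mul_centralBinom_succ m
    simp only [Nat.centralBinom_eq_two_mul_choose] at h
    zify at h
    linear_combination -(m + 1 : ℤ) * h
  linear_combination
    2 * hrec + (m + 1) ^ 2 * hc (m + 1) - (2 * m + 2) * (2 * m + 1) * hc m - c m * hcentral

/-- `T_s`, taken on integer arguments so that `n - 1` is not truncated. -/
def oddMomentCoeff : ℕ → ℤ → ℤ
  | 0, _ => 1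
  | s + 1, n => n ^ 2 * oddMomentCoeff s n - (n - 1) ^ 2 * oddMomentCoeff s (n - 1)

theorem odd_oddMomentCoeff (s : ℕ) (n : ℤ) : Odd (oddMomentCoeff s n) := by
  induction s generalizing n with
  | zero => exact odd_one
  | succ s ih =>
    have h₁ := ih n
    have h₂ := ih (n - 1)
    rcases Int.even_or_odd n with h | h
    · exact ((h.pow_of_ne_zero two_ne_zero).mul_right _).sub_odd ((h.sub_odd odd_one).pow.mul h₂)
    · exact (h.pow.mul h₁).sub_even
        (((h.sub_odd odd_one).pow_of_ne_zero two_ne_zero).mul_right _)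

theorem two_mul_binomMoment_eq (s n : ℕ) :
    2 * (binomMoment n (2 * s + 3) : ℤ) = oddMomentCoeff s n * n ^ 2 * (2 * n).choose n := by
  induction s generalizing n with
  | zero =>
    rcases n with _ | m
    · simp [binomMoment]
    rw [two_mul_binomMoment_add_two (c := fun n => n)
      (fun n => by exact_mod_cast two_mul_binomMoment_one n)]
    simp [oddMomentCoeff]
  | succ s ih =>
    rcases n with _ | m
    · simp [binomMoment]
    rw [show 2 * (s + 1) + 3 = 2 * s + 3 + 2 by ring,
      two_mul_binomMoment_add_two (c := fun n => oddMomentCoeff s n * n ^ 2) (fun n => by rw [ih])]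
    push_cast
    simp only [oddMomentCoeff, add_sub_cancel_right]
    ring

theorem half_odd_integer (n r : ℕ) (hn : 1 ≤ n) (hr : 1 ≤ r) :
    ∃ t : ℕ, Odd t ∧ 0 < t ∧
      2 * ∑ k ∈ Finset.Icc 1 n, (2 * n).choose (n - k) * k ^ (2 * r + 1)
        = t * n ^ 2 * (2 * n).choose n := by
  obtain ⟨s, rfl⟩ := Nat.exists_eq_add_of_le' hr
  have hmoment := two_mul_binomMoment_eq s n
  have hmoment_pos : 0 < binomMoment n (2 * (s + 1) + 1) :=
    sum_pos (fun k hk => by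
      have := Nat.choose_pos (show 2 * n ≥ n - k by omega)
      have := (mem_Icc.1 hk).1
      positivity) ⟨n, mem_Icc.2 ⟨hn, le_rfl⟩⟩
  have hcoeff_pos : 0 < oddMomentCoeff s n := by
    refine pos_of_mul_pos_left (b := (n : ℤ) ^ 2 * (2 * n).choose n) ?_ (by positivity)
    rw [← mul_assoc, ← hmoment]
    positivity
  lift oddMomentCoeff s n to ℕ using hcoeff_pos.le with t ht
  refine ⟨t, (Int.odd_coe_nat t).1 (ht ▸ odd_oddMomentCoeff s n), by omega, ?_⟩
  exact_mod_cast hmoment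
end

section
/- For all integers n ≥ 1 and 0 ≤ r < n: Σ_{k=1}^{n-r} k(k+r)(2k+r)^3 · C(2n, n-k) · C(2n, n+k+r) = n² · C(2n, n) · C(2n-2, n-r-1) · (4n + r²). -/
/-!
Gosper's algorithm applied to the summand `k (k+r) (2k+r)^3 C(2n,n+k) C(2n,n+k+r)` (after
`C(2n,n-k) = C(2n,n+k)`) finds an antidifference of the form `Q(k) C(2n,n+k) C(2n,n+k+r)` with a
polynomial `Q` of degree six, up to the factor `2(n-1)(2n-1)`. The sum therefore telescopes to the
value at `k = 1`, since the antidifference vanishes at `k = n - r + 1`; the value at `k = 1` is the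
right-hand side once `Q(1) = (n-1)(n+1)(n+r)(n+r+1)(4n+r²)` is combined with two ratio identities
for binomial coefficients. The factor `2(n-1)(2n-1)` vanishes only for `n = 1`, checked directly.
-/

open Finset

/-- `Nat.choose_succ_right_eq` with the subtraction `n - k` taken in a ring, hence valid for all
`k`: for `n < k` both sides vanish. -/
theorem Nat.cast_choose_succ_right_eq {R : Type*} [CommRing R] (n k : ℕ) :
    (n.choose (k + 1) : R) * (k + 1) = n.choose k * (n - k) := by
  rcases le_or_gt k n with hkn | hnk
  · have h := congrArg (Nat.cast (R := R)) (Nat.choose_succ_right_eq n k)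
    push_cast [hkn] at h
    exact h
  · simp [Nat.choose_eq_zero_of_lt hnk, Nat.choose_eq_zero_of_lt (Nat.lt_succ_of_lt hnk)]

theorem Nat.choose_add_two_mul (n k : ℕ) :
    (n + 2).choose (k + 2) * ((k + 2) * (k + 1)) = (n + 2) * (n + 1) * n.choose k := by
  rw [← mul_assoc, ← Nat.add_one_mul_choose_eq (n + 1) (k + 1), mul_assoc,
    ← Nat.add_one_mul_choose_eq n k, mul_assoc]

namespace CubicCatalan

/-- The polynomial `Q(k)` of the antidifference found by Gosper's algorithm. -/
def certificate (k n r : ℤ) : ℤ :=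
  n*r^4 + 4*n^2*r^2 - n^2*r^4 - 5*n^3*r^2 - 4*n^4 + n^4*r^2 + 4*n^5
  + k*r^4 + 7*k*n*r^3 - 3*k*n*r^4 + 8*k*n^2*r - 13*k*n^2*r^3 + 2*k*n^2*r^4
  - 12*k*n^3*r + 2*k*n^3*r^3 + 8*k*n^4*r
  - 4*k^2*r^2 + 7*k^2*r^3 - 2*k^2*r^4 + 23*k^2*n*r^2 - 21*k^2*n*r^3 + 2*k^2*n*r^4
  + 8*k^2*n^2 - 41*k^2*n^2*r^2 + 14*k^2*n^2*r^3 - 12*k^2*n^3 + 10*k^2*n^3*r^2 + 8*k^2*n^4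
  - 8*k^3*r + 18*k^3*r^2 - 8*k^3*r^3 + 32*k^3*n*r - 54*k^3*n*r^2 + 12*k^3*n*r^3
  - 56*k^3*n^2*r + 36*k^3*n^2*r^2 + 16*k^3*n^3*r
  - 4*k^4 + 20*k^4*r - 14*k^4*r^2 + 16*k^4*n - 60*k^4*n*r + 26*k^4*n*r^2
  - 28*k^4*n^2 + 40*k^4*n^2*r + 8*k^4*n^3
  + 8*k^5 - 12*k^5*r - 24*k^5*n + 24*k^5*n*r + 16*k^5*n^2
  - 4*k^6 + 8*k^6*n

/-- Gosper's equation: `(n+k+1)(n+k+r+1)` and `(n-k)(n-k-r)` are the factors by which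
`C(2n,n+k) C(2n,n+k+r)` changes when `k` is replaced by `k + 1`. -/
theorem certificate_gosper_eq (k n r : ℤ) :
    certificate k n r * ((n + k + 1) * (n + k + r + 1))
        - certificate (k + 1) n r * ((n - k) * (n - k - r))
      = 2 * (n - 1) * (2 * n - 1) * (k * (k + r) * (2 * k + r) ^ 3)
        * ((n + k + 1) * (n + k + r + 1)) := by
  simp only [certificate]
  ring

theorem certificate_one (n r : ℤ) :
    certificate 1 n r = (n - 1) * (n + 1) * (n + r) * (n + r + 1) * (4 * n + r ^ 2) := by
  simp only [certificate]
  ring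

def antidiff (n r k : ℕ) : ℤ :=
  certificate k n r * (2 * n).choose (n + k) * (2 * n).choose (n + k + r)

theorem antidiff_sub_succ (n r k : ℕ) :
    antidiff n r k - antidiff n r (k + 1)
      = 2 * ((n : ℤ) - 1) * (2 * n - 1)
        * (k * (k + r) * (2 * k + r) ^ 3 * (2 * n).choose (n + k) * (2 * n).choose (n + k + r)) := by
  have hfirst := Nat.cast_choose_succ_right_eq (R := ℤ) (2 * n) (n + k)
  have hsecond := Nat.cast_choose_succ_right_eq (R := ℤ) (2 * n) (n + k + r)
  have hne : ((n : ℤ) + k + 1) * (n + k + r + 1) ≠ 0 := by positivity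
  apply mul_right_cancel₀ hne
  simp only [antidiff, show n + (k + 1) = n + k + 1 by ring,
    show n + k + 1 + r = n + k + r + 1 by ring]
  push_cast at hfirst hsecond ⊢
  linear_combination
    ((2 * n).choose (n + k) * (2 * n).choose (n + k + r) : ℤ) * certificate_gosper_eq k n r
      - certificate (k + 1) n r * (2 * n).choose (n + k + 1) * (n + k + 1) * hsecond
      - certificate (k + 1) n r * (2 * n).choose (n + k + r) * (n - k - r) * hfirst

theorem antidiff_eq_zero_of_lt {n r k : ℕ} (h : n < k + r) : antidiff n r k = 0 := by
  simp [antidiff, Nat.choose_eq_zero_of_lt (show 2 * n < n + k + r by omega)]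

theorem antidiff_one {n r : ℕ} (hr : r < n) :
    antidiff n r 1 = 2 * ((n : ℤ) - 1) * (2 * n - 1)
      * (n ^ 2 * (2 * n).choose n * (2 * n - 2).choose (n - r - 1) * (4 * n + r ^ 2)) := by
  obtain ⟨m, rfl⟩ : ∃ m, n = m + 1 := ⟨n - 1, by omega⟩
  have hcentral := Nat.cast_choose_succ_right_eq (R := ℤ) (2 * (m + 1)) (m + 1)
  have hshift : ((2 * m + 2).choose (m + r + 2) : ℤ) * ((m + r + 2) * (m + r + 1))
      = (2 * m + 2) * (2 * m + 1) * (2 * m).choose (m - r) := by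
    rw [Nat.choose_symm_of_eq_add (show 2 * m = (m - r) + (m + r) by omega)]
    exact_mod_cast Nat.choose_add_two_mul (2 * m) (m + r)
  have hne : ((m : ℤ) + 2) * ((m + r + 2) * (m + r + 1)) ≠ 0 := by positivity
  apply mul_right_cancel₀ hne
  simp only [antidiff, Nat.cast_one, certificate_one, show m + 1 - r - 1 = m - r by omega, show m + 1 + 1 + r = m + r + 2 by ring,
    show 2 * (m + 1) = 2 * m + 2 by ring] at hcentral ⊢
  push_cast at hcentral ⊢
  linear_combination
    (m * (m + 2) * (m + r + 1) * (m + r + 2) * (4 * (m + 1) + r ^ 2)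
      * (2 * m + 2).choose (m + r + 2) * ((m + r + 2) * (m + r + 1)) : ℤ) * hcentral
    + (m * (m + 2) * (m + r + 1) * (m + r + 2) * (4 * (m + 1) + r ^ 2)
      * (2 * m + 2).choose (m + 1) * (m + 1) : ℤ) * hshift

theorem factor_mul_sum_eq {n r : ℕ} (hr : r < n) :
    2 * ((n : ℤ) - 1) * (2 * n - 1) * ∑ k ∈ Icc 1 (n - r),
        (k * (k + r) * (2 * k + r) ^ 3 * (2 * n).choose (n + k) * (2 * n).choose (n + k + r) : ℤ)
      = 2 * ((n : ℤ) - 1) * (2 * n - 1)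
        * (n ^ 2 * (2 * n).choose n * (2 * n - 2).choose (n - r - 1) * (4 * n + r ^ 2)) := by
  calc _ = ∑ k ∈ Icc 1 (n - r), -(antidiff n r (k + 1) - antidiff n r k) := by
          rw [mul_sum]
          congr! 1 with k
          rw [neg_sub, antidiff_sub_succ]
    _ = antidiff n r 1 - antidiff n r (n - r + 1) := by
          rw [sum_neg_distrib, sum_Icc_sub (by omega), neg_sub]
    _ = _ := by rw [antidiff_eq_zero_of_lt (k := n - r + 1) (by omega), antidiff_one hr, sub_zero]

end CubicCatalan

theorem cubic_catalan_identity_general (n r : ℕ) (hr : r < n) :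
    ∑ k ∈ Finset.Icc 1 (n - r),
        k * (k + r) * (2 * k + r) ^ 3 * (2 * n).choose (n - k) * (2 * n).choose (n + k + r)
      = n ^ 2 * (2 * n).choose n * (2 * n - 2).choose (n - r - 1) * (4 * n + r ^ 2) := by
  obtain rfl | hn : n = 1 ∨ 2 ≤ n := by omega
  · obtain rfl : r = 0 := by omega
    decide
  have hfactor : 2 * ((n : ℤ) - 1) * (2 * n - 1) ≠ 0 :=
    mul_ne_zero (mul_ne_zero two_ne_zero (by omega)) (by omega)
  have hsymm : ∀ k ∈ Icc 1 (n - r), (2 * n).choose (n - k) = (2 * n).choose (n + k) :=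
    fun k hk => Nat.choose_symm_of_eq_add (by grind)
  rw [sum_congr rfl fun k hk => by rw [hsymm k hk]]
  exact_mod_cast mul_left_cancel₀ hfactor (CubicCatalan.factor_mul_sum_eq hr)

theorem cubic_catalan_identity (n r : ℕ) (hn : 1 ≤ n) (hr : r < n) :
    ∑ k ∈ Finset.Icc 1 (n - r),
        k * (k + r) * (2 * k + r) ^ 3 * (2 * n).choose (n - k) * (2 * n).choose (n + k + r)
      = n ^ 2 * (2 * n).choose n * (2 * n - 2).choose (n - r - 1) * (4 * n + r ^ 2) :=
  cubic_catalan_identity_general n r hr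
end

section
/- For all integers n ≥ 1, 0 ≤ k ≤ n and r ≥ 0, the integer f_{n,k}(r) is divisible by n^{min(2, r+1)} · C(2n, n). -/
open Finset

/-- `f_{n,k}(r) = C(2n-2k, n-k) · Σ_{i=0}^{k} C(2n, i) · C(2k-2n, k-i) · (n-i)^{2r+1}`,
where `C(2k-2n, k-i)` is the generalized binomial coefficient of the (possibly negative)
integer `2k-2n`, formalized by `Ring.choose`. -/
noncomputable def fCoeff (n k r : ℕ) : ℤ :=
  ((2 * n - 2 * k).choose (n - k) : ℤ) *
    ∑ i ∈ Finset.range (k + 1),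
      ((2 * n).choose i : ℤ) * Ring.choose ((2 * k : ℤ) - 2 * n) (k - i) *
        ((n : ℤ) - i) ^ (2 * r + 1)

/-!
Put `m = n - k` and `j = k - i`, so that `2k - 2n = -2m` and `n - i = j + m`. The factor
`(n - i)^2 - m^2 = j (j + 2m)` is absorbed by `C(-2m, j)`, which turns the `(r+1)`-st sum for `k`
into the `r`-th sum for `k - 1`; with `(m+1) C(2m+2, m+1) = 2 (2m+1) C(2m, m)` for the prefactors
this gives the recurrence `f_{n,k}(r+1) = m^2 f_{n,k}(r) - m (m+1) f_{n,k-1}(r)` for `k ≥ 1`.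
For `r = 0`, two Chu–Vandermonde evaluations give `f_{n,k}(0) = 0` when `k ≥ 1`, and
`f_{n,0}(r) = n^{2r+1} C(2n, n)` is immediate. Induction on `r` then yields the divisibility by
`n^2 C(2n, n)` for `r ≥ 1`; the one step that needs the exact value rather than the induction
hypothesis is `f_{n,1}(1) = -(n-1) n^2 C(2n, n)`.
-/

namespace Ring

variable {R : Type*} [CommRing R] [BinomialRing R]

theorem succ_mul_choose_succ (a : R) (j : ℕ) :
    (j + 1 : R) * choose a (j + 1) = a * choose (a - 1) j := by
  simpa using choose_smul_choose a (Nat.le_add_left 1 j)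

theorem sub_mul_choose (a : R) (j : ℕ) :
    (a - j) * choose a j = a * choose (a - 1) j := by
  have h := choose_smul_choose a (Nat.le_add_right j 1)
  simp only [Nat.choose_succ_self_right, nsmul_eq_mul, Nat.cast_add, Nat.cast_one,
    add_tsub_cancel_left, choose_one_right', pow_one] at h
  linear_combination succ_mul_choose_succ a j - h

theorem succ_mul_succ_sub_mul_choose_succ (a : R) (j : ℕ) :
    (j + 1 : R) * (j + 1 - a) * choose a (j + 1) = a * (1 - a) * choose (a - 2) j := by
  have h := sub_mul_choose (a - 1) j
  rw [sub_sub, sub_sub, one_add_one_eq_two] at h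
  linear_combination (j + 1 - a) * succ_mul_choose_succ a j - a * h

theorem sum_range_natCast_choose_mul_choose (N : ℕ) (a : R) (k : ℕ) :
    ∑ i ∈ range (k + 1), (N.choose i : R) * choose a (k - i) = choose (N + a) k := by
  rw [add_choose_eq k (Commute.all _ _), Nat.sum_antidiagonal_eq_sum_range_succ_mk]
  simp [choose_natCast]

end Ring

theorem Nat.choose_two_mul_add_two_succ (k : ℕ) :
    (2 * k + 2).choose (k + 1) = 2 * (2 * k + 1).choose k := by
  rw [Nat.choose_succ_succ, Nat.choose_symm_half, ← two_mul]

def fSum (n k r : ℕ) : ℤ :=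
  ∑ i ∈ range (k + 1),
    ((2 * n).choose i : ℤ) * Ring.choose ((2 * k : ℤ) - 2 * n) (k - i) *
      ((n : ℤ) - i) ^ (2 * r + 1)

theorem fCoeff_eq (n k r : ℕ) :
    fCoeff n k r = ((2 * n - 2 * k).choose (n - k) : ℤ) * fSum n k r := rfl

theorem fSum_k_zero (n r : ℕ) : fSum n 0 r = (n : ℤ) ^ (2 * r + 1) := by
  simp [fSum]

theorem fSum_r_zero (k m : ℕ) : fSum (k + 1 + m) (k + 1) 0 = 0 := by
  set n := k + 1 + m
  have ha : (2 * (k + 1 : ℕ) : ℤ) - 2 * (n : ℕ) = -(2 * m) := by push_cast [n]; ring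
  have hsplit : fSum n (k + 1) 0 =
      ∑ i ∈ range (k + 1 + 1), ((2 * n).choose i : ℤ) *
          (((k + 1 - i : ℕ) : ℤ) * Ring.choose (-(2 * m : ℤ)) (k + 1 - i)) +
        m * ∑ i ∈ range (k + 1 + 1),
          ((2 * n).choose i : ℤ) * Ring.choose (-(2 * m : ℤ)) (k + 1 - i) := by
    simp only [fSum, ha, mul_sum, ← sum_add_distrib]
    refine sum_congr rfl fun i hi => ?_
    rw [Nat.cast_sub (by simpa [Nat.lt_succ_iff] using hi)]
    push_cast [n]
    ring
  have habsorb : ∑ i ∈ range (k + 1 + 1), ((2 * n).choose i : ℤ) *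
      (((k + 1 - i : ℕ) : ℤ) * Ring.choose (-(2 * m : ℤ)) (k + 1 - i)) =
        -(2 * m) * ((2 * k + 1).choose k : ℤ) := by
    rw [sum_range_succ, Nat.sub_self, Nat.cast_zero, zero_mul, mul_zero, add_zero,
      ← Ring.choose_natCast, show (((2 * k + 1 : ℕ)) : ℤ) = (2 * n : ℕ) + (-(2 * m) - 1) by
        push_cast [n]; ring, ← Ring.sum_range_natCast_choose_mul_choose, mul_sum]
    refine sum_congr rfl fun i hi => ?_
    rw [show k + 1 - i = k - i + 1 by have := mem_range.mp hi; omega, Nat.cast_succ,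
      Ring.succ_mul_choose_succ]
    ring
  have hvandermonde : ∑ i ∈ range (k + 1 + 1), ((2 * n).choose i : ℤ) *
      Ring.choose (-(2 * m : ℤ)) (k + 1 - i) = ((2 * k + 2).choose (k + 1) : ℤ) := by
    rw [Ring.sum_range_natCast_choose_mul_choose, ← Ring.choose_natCast]
    congr 1
    push_cast [n]
    ring
  rw [hsplit, habsorb, hvandermonde, Nat.choose_two_mul_add_two_succ]
  push_cast
  ring

theorem fSum_r_succ (k m r : ℕ) :
    fSum (k + 1 + m) (k + 1) (r + 1) =
      m ^ 2 * fSum (k + 1 + m) (k + 1) r - 2 * m * (2 * m + 1) * fSum (k + 1 + m) k r := by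
  have ha : (2 * (k + 1 : ℕ) : ℤ) - 2 * (k + 1 + m : ℕ) = -(2 * m) := by push_cast; ring
  have hb : (2 * k : ℤ) - 2 * (k + 1 + m : ℕ) = -(2 * m) - 2 := by push_cast; ring
  suffices h : fSum (k + 1 + m) (k + 1) (r + 1) - m ^ 2 * fSum (k + 1 + m) (k + 1) r =
      -(2 * m) * (2 * m + 1) * fSum (k + 1 + m) k r by linear_combination h
  simp only [fSum, ha, hb, mul_sum, ← sum_sub_distrib]
  rw [sum_range_succ, Nat.sub_self, Ring.choose_zero_right]
  refine (add_eq_left.mpr (by push_cast; ring)).trans (sum_congr rfl fun i hi => ?_)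
  obtain ⟨j, rfl⟩ := Nat.exists_eq_add_of_le (Nat.lt_succ_iff.mp (mem_range.mp hi))
  rw [show i + j + 1 - i = j + 1 by omega, Nat.add_sub_cancel_left,
    show ((i + j + 1 + m : ℕ) : ℤ) - i = j + 1 + m by push_cast; ring]
  linear_combination ((2 * (i + j + 1 + m)).choose i : ℤ) * ((j : ℤ) + 1 + m) ^ (2 * r + 1) *
    Ring.succ_mul_succ_sub_mul_choose_succ (-(2 * m : ℤ)) j

theorem fCoeff_k_zero (n r : ℕ) :
    fCoeff n 0 r = (n : ℤ) ^ (2 * r + 1) * ((2 * n).choose n : ℤ) := by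
  rw [fCoeff_eq, fSum_k_zero, mul_comm]
  simp

theorem fCoeff_r_zero {n k : ℕ} (hk : k ≤ n) :
    fCoeff n k 0 = if k = 0 then (n : ℤ) * ((2 * n).choose n : ℤ) else 0 := by
  rcases k with _ | k
  · simp [fCoeff_k_zero]
  · obtain ⟨m, rfl⟩ := Nat.exists_eq_add_of_le hk
    simp [fCoeff_eq, fSum_r_zero]

theorem fCoeff_r_succ (k m r : ℕ) :
    fCoeff (k + 1 + m) (k + 1) (r + 1) =
      m ^ 2 * fCoeff (k + 1 + m) (k + 1) r - m * (m + 1) * fCoeff (k + 1 + m) k r := by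
  have hcentral : ((m : ℤ) + 1) * ((2 * (m + 1)).choose (m + 1) : ℤ) =
      2 * (2 * m + 1) * ((2 * m).choose m : ℤ) := by
    exact_mod_cast Nat.succ_mul_centralBinom_succ m
  simp only [fCoeff_eq, fSum_r_succ, show 2 * (k + 1 + m) - 2 * (k + 1) = 2 * m by omega,
    show k + 1 + m - (k + 1) = m by omega, show 2 * (k + 1 + m) - 2 * k = 2 * (m + 1) by omega,
    show k + 1 + m - k = m + 1 by omega]
  linear_combination m * fSum (k + 1 + m) k r * hcentral

theorem sq_mul_choose_dvd_fCoeff_k_zero (n r : ℕ) :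
    (n : ℤ) ^ 2 * ((2 * n).choose n : ℤ) ∣ fCoeff n 0 (r + 1) :=
  ⟨(n : ℤ) ^ (2 * r + 1), by rw [fCoeff_k_zero]; ring⟩

theorem sq_mul_choose_dvd_fCoeff_r_succ (r : ℕ) {n k : ℕ} (hk : k ≤ n) :
    (n : ℤ) ^ 2 * ((2 * n).choose n : ℤ) ∣ fCoeff n k (r + 1) := by
  induction r generalizing k with
  | zero =>
    obtain _ | k := k
    · exact sq_mul_choose_dvd_fCoeff_k_zero n 0
    obtain ⟨m, rfl⟩ := Nat.exists_eq_add_of_le hk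
    rw [fCoeff_r_succ, fCoeff_r_zero hk, if_neg k.succ_ne_zero, fCoeff_r_zero (by omega)]
    split_ifs with hk0
    · subst hk0
      exact ⟨-m, by push_cast; ring⟩
    · simp
  | succ r ih =>
    obtain _ | k := k
    · exact sq_mul_choose_dvd_fCoeff_k_zero n (r + 1)
    obtain ⟨m, rfl⟩ := Nat.exists_eq_add_of_le hk
    rw [fCoeff_r_succ]
    exact dvd_sub ((ih hk).mul_left _) ((ih (by omega)).mul_left _)

theorem f_divisibility_general (n k r : ℕ) (hk : k ≤ n) :
    ((n : ℤ) ^ (min 2 (r + 1)) * ((2 * n).choose n : ℤ)) ∣ fCoeff n k r := by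
  rcases r with _ | r
  · rw [fCoeff_r_zero hk]
    split_ifs <;> simp
  · rw [show min 2 (r + 1 + 1) = 2 by omega]
    exact sq_mul_choose_dvd_fCoeff_r_succ r hk

theorem f_divisibility (n k r : ℕ) (hn : 1 ≤ n) (hk : k ≤ n) :
    ((n : ℤ) ^ (min 2 (r + 1)) * ((2 * n).choose n : ℤ)) ∣ fCoeff n k r :=
  f_divisibility_general n k r hk
end

section
/- Let m ≥ 3, let n_1, …, n_m be positive integers, and let r ≥ 0 be an integer. Then S_{2r+1}(n_1, …, n_m) = Σ_{l=1}^{n_1} C(n_1 - 1, l - 1) · C(n_2 + n_3, n_2 - l) · S_{2r+1}(l, n_3, n_4, …, n_m), where C(n_2+n_3, n_2-l) is interpreted as 0 when l > n_2, and the right-hand S is taken on the (m-1)-tuple (l, n_3, …, n_m). -/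
/-!
The closing factor `C(a_j + a_1, a_j + k) / (a_1 C(a_1 + a_j, a_1))` of `S_{2r+1}(a_1, …, a_j)`
equals `C(a_1 - 1, k - 1) / (k C(a_j + k, k))`, so `S` is a sum over `k` of a weight depending
only on `k` and `a_j`, times `C(a_1 - 1, k - 1)`, times the path product
`∏_{i<j} C(a_i + a_{i+1}, a_i + k)`. Both sides of the recurrence then share everything except
the factors involving `n_1, n_2, n_3`, and it remains to show, for each `k`,
`Σ_l C(n_1-1, l-1) C(l-1, k-1) C(n_2+n_3, n_2-l) C(l+n_3, l+k)
  = C(n_1-1, k-1) C(n_1+n_2, n_1+k) C(n_2+n_3, n_2+k)`.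
Rewriting both products on the left by `C(n, a) C(a, b) = C(n, b) C(n-b, a-b)` turns this into
Vandermonde's identity.
-/

open Finset

/-- `S_{2r+1}(a_1,…,a_j) = a_1⁻¹ C(a_1+a_j, a_1)⁻¹ Σ_{k=1}^{a_1} k^{2r+1} Π_{i=1}^{j} C(a_i+a_{i+1}, a_i+k)`,
with the convention `a_{j+1} = a_1`.  The tuple `(a_1, …, a_j)` is encoded by the values of
`a : ℕ → ℕ` on `{1, …, j}`. -/
def S (j : ℕ) (a : ℕ → ℕ) (r : ℕ) : ℚ :=
  (∑ k ∈ Finset.Icc 1 (a 1), (k : ℚ) ^ (2 * r + 1) *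
      ∏ i ∈ Finset.Icc 1 j, ((a i + a (if i = j then 1 else i + 1)).choose (a i + k) : ℚ))
    / ((a 1 : ℚ) * ((a 1 + a j).choose (a 1) : ℚ))

namespace Nat

theorem sum_range_choose_mul_choose_add (p q s : ℕ) :
    ∑ i ∈ range (p + 1), p.choose i * q.choose (i + s) = (p + q).choose (p + s) := by
  have hlow : ∑ t ∈ range s, q.choose t * p.choose (p + s - t) = 0 :=
    sum_eq_zero fun t ht => by
      rw [choose_eq_zero_of_lt (by grind : p < p + s - t), mul_zero]
  rw [add_comm p q, add_choose_eq,
    Finset.Nat.sum_antidiagonal_eq_sum_range_succ (fun i j => q.choose i * p.choose j),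
    Nat.succ_eq_add_one, show p + s + 1 = s + (p + 1) by omega, sum_range_add _ s, hlow, zero_add]
  refine sum_congr rfl fun i hi => ?_
  rw [mul_comm, add_comm i s, ← choose_symm (by grind : i ≤ p)]
  congr 2
  omega

theorem ite_choose_mul_choose (b c l k : ℕ) :
    (if l ≤ b then (b + c).choose (b - l) else 0) * (l + c).choose (l + k)
      = (b + c).choose (b + k) * (b + k).choose (l + k) := by
  by_cases hlb : l ≤ b
  swap
  · rw [if_neg hlb, zero_mul, choose_eq_zero_of_lt (by omega : b + k < l + k), mul_zero]
  by_cases hkc : k ≤ c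
  swap
  · rw [choose_eq_zero_of_lt (by omega : l + c < l + k),
      choose_eq_zero_of_lt (by omega : b + c < b + k), mul_zero, zero_mul]
  rw [if_pos hlb, choose_symm_of_eq_add (by omega : b + c = (b - l) + (l + c)),
    choose_mul (by omega), choose_mul (by omega)]
  congr 1
  exact choose_symm_of_eq_add (by omega)

theorem sum_Icc_choose_pred_mul_ite_choose (a b c k : ℕ) (hk : 1 ≤ k) (ha : 1 ≤ a) :
    ∑ l ∈ Icc 1 a, (a - 1).choose (l - 1) * (l - 1).choose (k - 1) *
        ((if l ≤ b then (b + c).choose (b - l) else 0) * (l + c).choose (l + k))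
      = (a - 1).choose (k - 1) * (a + b).choose (a + k) * (b + c).choose (b + k) := by
  by_cases hka : k ≤ a
  swap
  · rw [choose_eq_zero_of_lt (by omega : a - 1 < k - 1), sum_eq_zero]
    · simp
    intro l hl
    rw [mem_Icc] at hl
    rw [choose_eq_zero_of_lt (by omega : l - 1 < k - 1)]
    simp
  have hvanish : ∀ l ∈ Icc 1 a, l ∉ Icc k a →
      (a - 1).choose (l - 1) * (l - 1).choose (k - 1) *
        ((if l ≤ b then (b + c).choose (b - l) else 0) * (l + c).choose (l + k)) = 0 := by
    intro l hl hlk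
    simp only [mem_Icc] at hl hlk
    rw [choose_eq_zero_of_lt (by omega : l - 1 < k - 1)]
    simp
  rw [← sum_subset (Icc_subset_Icc_left hk) hvanish, ← Ico_add_one_right_eq_Icc,
    sum_Ico_eq_sum_range, show a + 1 - k = (a - k) + 1 by omega]
  have hterm : ∀ i ∈ range (a - k + 1),
      (a - 1).choose (k + i - 1) * (k + i - 1).choose (k - 1) *
        ((if k + i ≤ b then (b + c).choose (b - (k + i)) else 0) * (k + i + c).choose (k + i + k))
      = (a - 1).choose (k - 1) * (b + c).choose (b + k) *
          ((a - k).choose i * (b + k).choose (i + 2 * k)) := by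
    intro i _
    rw [ite_choose_mul_choose, choose_mul (by omega),
      show a - 1 - (k - 1) = a - k by omega, show k + i - 1 - (k - 1) = i by omega,
      show k + i + k = i + 2 * k by omega]
    ring
  rw [sum_congr rfl hterm, ← mul_sum, sum_range_choose_mul_choose_add,
    show a - k + (b + k) = a + b by omega, show a - k + 2 * k = a + k by omega]
  ring

theorem choose_add_mul_mul_choose (N l k : ℕ) (hl : 1 ≤ l) (hk : 1 ≤ k) :
    (N + l).choose (N + k) * (k * (N + k).choose k)
      = (l - 1).choose (k - 1) * (l * (l + N).choose l) := by
  have hsplit : (N + l).choose (N + k) * (N + k).choose N = (N + l).choose N * l.choose k := by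
    rw [choose_mul (by omega), Nat.add_sub_cancel_left, Nat.add_sub_cancel_left]
  have hpred : l * (l - 1).choose (k - 1) = l.choose k * k := by
    simpa [show l - 1 + 1 = l by omega, show k - 1 + 1 = k by omega]
      using add_one_mul_choose_eq (l - 1) (k - 1)
  have hsymm : (l + N).choose l = (N + l).choose N := by
    rw [add_comm l N]; exact choose_symm_add.symm
  calc (N + l).choose (N + k) * (k * (N + k).choose k)
      = (N + l).choose (N + k) * (N + k).choose N * k := by rw [← choose_symm_add]; ring
    _ = (N + l).choose N * l.choose k * k := by rw [hsplit]
    _ = (l - 1).choose (k - 1) * (l * (l + N).choose l) := by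
      rw [mul_assoc, ← hpred, hsymm]; ring

end Nat

theorem cast_choose_add_div (N l k : ℕ) (hl : 1 ≤ l) (hk : 1 ≤ k) :
    ((N + l).choose (N + k) : ℚ) / (l * (l + N).choose l)
      = ((l - 1).choose (k - 1) : ℚ) / (k * (N + k).choose k) := by
  have : 0 < (l + N).choose l := Nat.choose_pos (by omega)
  have : 0 < (N + k).choose k := Nat.choose_pos (by omega)
  rw [div_eq_div_iff (by positivity) (by positivity)]
  exact_mod_cast Nat.choose_add_mul_mul_choose N l k hl hk

theorem Finset.prod_Icc_cyclic {M : Type*} [CommMonoid M] (g : ℕ → ℕ → M) {j : ℕ} (hj : 1 ≤ j) :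
    ∏ i ∈ Icc 1 j, g i (if i = j then 1 else i + 1) = (∏ i ∈ Ico 1 j, g i (i + 1)) * g j 1 := by
  rw [← Ico_add_one_right_eq_Icc, prod_Ico_succ_top hj, if_pos rfl]
  congr 1
  refine prod_congr rfl fun i hi => ?_
  rw [if_neg (mem_Ico.1 hi).2.ne]

theorem S_eq_sum (j : ℕ) (hj : 1 ≤ j) (a : ℕ → ℕ) (ha : 1 ≤ a 1) (r : ℕ) :
    S j a r = ∑ k ∈ Icc 1 (a 1), (k : ℚ) ^ (2 * r) / (a j + k).choose k *
      (a 1 - 1).choose (k - 1) * ∏ i ∈ Ico 1 j, ((a i + a (i + 1)).choose (a i + k) : ℚ) := by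
  rw [S, sum_div]
  refine sum_congr rfl fun k hk => ?_
  have hk1 : 1 ≤ k := (mem_Icc.1 hk).1
  have hk0 : (k : ℚ) ≠ 0 := by positivity
  have hC : ((a j + k).choose k : ℚ) ≠ 0 := by
    have := Nat.choose_pos (n := a j + k) (k := k) (by omega); positivity
  rw [prod_Icc_cyclic (fun i i' => ((a i + a i').choose (a i + k) : ℚ)) hj]
  calc _ = (k : ℚ) ^ (2 * r + 1) * (∏ i ∈ Ico 1 j, ((a i + a (i + 1)).choose (a i + k) : ℚ)) *
        (((a j + a 1).choose (a j + k) : ℚ) / (a 1 * (a 1 + a j).choose (a 1))) := by ring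
    _ = _ := by
      rw [cast_choose_add_div _ _ _ ha hk1]
      field_simp
      ring

theorem S_cons_eq_sum (j : ℕ) (hj : 2 ≤ j) (n : ℕ → ℕ) {l L : ℕ} (hl : 1 ≤ l) (hlL : l ≤ L)
    (r : ℕ) :
    S j (fun i => if i = 1 then l else n (i + 1)) r
      = ∑ k ∈ Icc 1 L, (k : ℚ) ^ (2 * r) / (n (j + 1) + k).choose k * (l - 1).choose (k - 1) *
          ((l + n 3).choose (l + k) *
            ∏ i ∈ Ico 3 (j + 1), ((n i + n (i + 1)).choose (n i + k) : ℚ)) := by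
  rw [S_eq_sum j (by omega) _ (by simpa using hl) r]
  simp only [↓reduceIte, if_neg (show j ≠ 1 by omega)]
  refine sum_subset (Icc_subset_Icc_right hlL) (fun k hk hkl => ?_) |>.trans (sum_congr rfl ?_)
  · simp only [mem_Icc] at hk hkl
    rw [Nat.choose_eq_zero_of_lt (by omega : l - 1 < k - 1)]
    simp
  · intro k _
    rw [prod_eq_prod_Ico_succ_bot (by omega), if_pos rfl, if_neg (show 1 + 1 ≠ 1 by omega),
      ← prod_Ico_add' (fun i => ((n i + n (i + 1)).choose (n i + k) : ℚ)) 2 j 1]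
    refine congrArg _ (congrArg _ (prod_congr rfl fun i hi => ?_))
    have hi := mem_Ico.1 hi
    rw [if_neg (show i ≠ 1 by omega), if_neg (show i + 1 ≠ 1 by omega)]

theorem S_recurrence (m : ℕ) (hm : 3 ≤ m) (n : ℕ → ℕ)
    (hpos : ∀ i ∈ Finset.Icc 1 m, 0 < n i) (r : ℕ) :
    S m n r
      = ∑ l ∈ Finset.Icc 1 (n 1),
          ((n 1 - 1).choose (l - 1) : ℚ) *
            (if l ≤ n 2 then ((n 2 + n 3).choose (n 2 - l) : ℚ) else 0) *
            S (m - 1) (fun i => if i = 1 then l else n (i + 1)) r := by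
  have hn1 : 1 ≤ n 1 := hpos 1 (by simp only [mem_Icc]; omega)
  set w : ℕ → ℚ := fun k => (k : ℚ) ^ (2 * r) / (n m + k).choose k
  set P : ℕ → ℚ := fun k => ∏ i ∈ Ico 3 m, ((n i + n (i + 1)).choose (n i + k) : ℚ)
  have hR : ∀ l ∈ Icc 1 (n 1), S (m - 1) (fun i => if i = 1 then l else n (i + 1)) r
      = ∑ k ∈ Icc 1 (n 1), w k * (l - 1).choose (k - 1) * ((l + n 3).choose (l + k) * P k) := by
    intro l hl
    rw [S_cons_eq_sum (m - 1) (by omega) n (mem_Icc.1 hl).1 (mem_Icc.1 hl).2,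
      Nat.sub_add_cancel (by omega : 1 ≤ m)]
  rw [S_eq_sum m (by omega) n hn1]
  conv_rhs => rw [sum_congr rfl fun l hl => by rw [hR l hl]]
  simp only [mul_sum]
  rw [sum_comm]
  refine sum_congr rfl fun k hk => ?_
  have hcore := congrArg (Nat.cast : ℕ → ℚ)
    (Nat.sum_Icc_choose_pred_mul_ite_choose (n 1) (n 2) (n 3) k (mem_Icc.1 hk).1 hn1)
  push_cast at hcore
  calc _ = w k * P k * ((n 1 + n 2).choose (n 1 + k) * (n 2 + n 3).choose (n 2 + k) *
          (n 1 - 1).choose (k - 1)) := by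
        rw [prod_eq_prod_Ico_succ_bot (by omega), prod_eq_prod_Ico_succ_bot (by omega)]
        simp only [w, P]
        ring
    _ = w k * P k * ∑ l ∈ Icc 1 (n 1), ((n 1 - 1).choose (l - 1) * (l - 1).choose (k - 1) *
          ((if l ≤ n 2 then ((n 2 + n 3).choose (n 2 - l) : ℚ) else 0) *
            (l + n 3).choose (l + k)) : ℚ) := by rw [hcore]; ring
    _ = _ := by rw [mul_sum]; exact sum_congr rfl fun l _ => by ring
end

section
/- For all integers n ≥ 1 and 1 ≤ r ≤ n: Σ_{k=1}^{n} C(2n, n-k) · k^{2r} = Σ_{k=0}^{r-1} 4^{n-k-1} · Σ_{i=0}^{k} C(2n, i) · C(2k-2n, k-i) · (n-i)^{2r-1}. -/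
/-!
Applying `(n - x d/dx) ^ m` to `(1 + x) ^ (2 n)` gives `(1 + x) ^ (2 n - m) P_m(x)`, i.e.
`C(2n, i) (n - i) ^ m = ∑ j, p_{m,j} C(2n - m, i - j)`, and `p_{m,m-j} = (-1) ^ m p_{m,j}`.
Take `m = 2r - 1`. Multiplying by `n - i` and summing over the row `C(2n - m, ·)` turns the
left-hand side, half of `∑ i, C(2n, i) (n - i) ^ (2r)`, into `4 ^ (n - r) ∑_{j<r} p_j (2r - 1 - 2j)`
(the terms with `j ≥ r` mirror those with `j < r`). Vandermonde's convolution turns the inner sum on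
the right into `∑ j, p_j C(2k - 2r + 1, k - j)`, and summing over `k` against `4 ^ (r - 1 - k)`
leaves `2r - 1 - 2j` for `j < r` and `0` otherwise: a value `U_{2(r-1-j)}(1)` of a Chebyshev
polynomial.
-/

open Finset

def intChoose (a t : ℤ) : ℤ := if t < 0 then 0 else Ring.choose a t.toNat

theorem intChoose_of_neg (a : ℤ) {t : ℤ} (ht : t < 0) : intChoose a t = 0 := if_pos ht

@[simp]
theorem intChoose_natCast_right (a : ℤ) (k : ℕ) : intChoose a k = Ring.choose a k := by
  simp [intChoose]

theorem intChoose_natCast (N k : ℕ) : intChoose N k = N.choose k := by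
  rw [intChoose_natCast_right, Ring.choose_natCast]

theorem intChoose_zero_right (a : ℤ) : intChoose a 0 = 1 := by
  rw [show (0 : ℤ) = (0 : ℕ) from rfl, intChoose_natCast_right, Ring.choose_zero_right]

theorem intChoose_add_one_left (a t : ℤ) :
    intChoose (a + 1) t = intChoose a t + intChoose a (t - 1) := by
  rcases lt_or_ge t 0 with ht | ht
  · simp [intChoose_of_neg _ ht, intChoose_of_neg _ (show t - 1 < 0 by omega)]
  lift t to ℕ using ht
  cases t with
  | zero => simp [intChoose_zero_right, intChoose_of_neg]
  | succ s =>
    rw [show ((s + 1 : ℕ) : ℤ) - 1 = s by push_cast; ring, intChoose_natCast_right,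
      intChoose_natCast_right, intChoose_natCast_right, Ring.choose_succ_succ, add_comm]

theorem mul_intChoose_add_one_left (a t : ℤ) :
    t * intChoose (a + 1) t = (a + 1) * intChoose a (t - 1) := by
  rcases lt_or_ge t 1 with ht | ht
  · rcases lt_or_eq_of_le (show t ≤ 0 by omega) with ht' | rfl
    · simp [intChoose_of_neg _ ht', intChoose_of_neg _ (show t - 1 < 0 by omega)]
    · simp [intChoose_of_neg]
  obtain ⟨s, rfl⟩ : ∃ s : ℕ, t = s + 1 := ⟨(t - 1).toNat, by omega⟩
  have h := Ring.choose_smul_choose (a + 1) (show 1 ≤ s + 1 by omega)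
  rw [Nat.choose_one_right, Ring.choose_one_right, Nat.cast_one, add_sub_cancel_right,
    Nat.add_sub_cancel, nsmul_eq_mul] at h
  rw [show ((s : ℤ) + 1) = ((s + 1 : ℕ) : ℤ) by push_cast; ring, intChoose_natCast_right,
    Nat.cast_succ, add_sub_cancel_right, intChoose_natCast_right, ← h, Nat.cast_succ]

theorem sub_mul_intChoose_add_one_left (a w t : ℤ) :
    (w - t) * intChoose (a + 1) t = w * intChoose a t + (w - (a + 1)) * intChoose a (t - 1) := by
  linear_combination w * intChoose_add_one_left a t - mul_intChoose_add_one_left a t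

theorem sum_range_eq_sum_range_sub_of_eq_zero {M : Type*} [AddCommMonoid M] {f : ℕ → M} {j : ℕ}
    (hf : ∀ i < j, f i = 0) (L : ℕ) : ∑ i ∈ range L, f i = ∑ t ∈ range (L - j), f (j + t) := by
  rcases le_or_gt j L with hjL | hjL
  · rw [← sum_range_add_sum_Ico f hjL, sum_eq_zero fun i hi => hf i (mem_range.1 hi), zero_add,
      sum_Ico_eq_sum_range]
  · rw [Nat.sub_eq_zero_of_le hjL.le, range_zero, sum_empty]
    exact sum_eq_zero fun i hi => hf i (by simp at hi; omega)

theorem sum_range_intChoose_mul_intChoose (a b : ℤ) (k j : ℕ) :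
    ∑ i ∈ range (k + 1), intChoose a (i - j) * intChoose b (k - i) = intChoose (a + b) (k - j) := by
  rw [sum_range_eq_sum_range_sub_of_eq_zero (j := j)
    fun i hi => by rw [intChoose_of_neg _ (by omega), zero_mul]]
  rcases le_or_gt j k with hjk | hjk
  · obtain ⟨d, rfl⟩ := Nat.exists_eq_add_of_le hjk
    rw [show j + d + 1 - j = d + 1 by omega, Nat.cast_add, add_sub_cancel_left,
      intChoose_natCast_right, Ring.add_choose_eq d (Commute.all a b),
      Nat.sum_antidiagonal_eq_sum_range_succ (fun x y => Ring.choose a x * Ring.choose b y)]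
    refine sum_congr rfl fun t ht => ?_
    rw [show ((j + t : ℕ) : ℤ) - j = t by push_cast; ring,
      show (j : ℤ) + d - (j + t : ℕ) = (d - t : ℕ) by
        rw [mem_range] at ht; push_cast [Nat.cast_sub (show t ≤ d by omega)]; ring,
      intChoose_natCast_right, intChoose_natCast_right]
  · rw [Nat.sub_eq_zero_of_le hjk, range_zero, sum_empty, intChoose_of_neg _ (by omega)]

theorem two_mul_sum_range_sub_mul_choose (x : ℤ) (N : ℕ) :
    2 * ∑ t ∈ range (N + 1), (x - t) * N.choose t = (2 * x - N) * 2 ^ N := by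
  have hreflect : ∑ t ∈ range (N + 1), (x - t) * N.choose t
      = ∑ t ∈ range (N + 1), (x - N + t) * N.choose t := by
    rw [← sum_range_reflect]
    refine sum_congr rfl fun t ht => ?_
    have htN : t ≤ N := Nat.lt_succ_iff.1 (mem_range.1 ht)
    rw [Nat.add_sub_cancel, Nat.choose_symm htN, Nat.cast_sub htN]
    ring
  have hsum : (∑ t ∈ range (N + 1), (N.choose t : ℤ)) = 2 ^ N := by
    exact_mod_cast Nat.sum_range_choose N
  calc 2 * ∑ t ∈ range (N + 1), (x - t) * N.choose t
      = ∑ t ∈ range (N + 1), ((x - t) + (x - N + t)) * N.choose t := by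
        rw [two_mul]
        nth_rw 2 [hreflect]
        simp only [add_mul, sum_add_distrib]
    _ = (2 * x - N) * 2 ^ N := by
        rw [← hsum, mul_sum]
        exact sum_congr rfl fun t _ => by ring

theorem two_mul_sum_range_sub_mul_intChoose (c : ℤ) {N j L : ℕ} (h : j + N ≤ L) :
    2 * ∑ i ∈ range (L + 1), (c - i) * intChoose N (i - j) = (2 * (c - j) - N) * 2 ^ N := by
  rw [sum_range_eq_sum_range_sub_of_eq_zero (j := j)
      fun i hi => by rw [intChoose_of_neg _ (by omega), mul_zero],
    ← sum_subset (range_subset_range.2 (show N + 1 ≤ L + 1 - j by omega)) fun t _ ht => by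
      rw [mem_range, not_lt] at ht
      rw [show ((j + t : ℕ) : ℤ) - j = t by push_cast; ring, intChoose_natCast,
        Nat.choose_eq_zero_of_lt (by omega), Nat.cast_zero, mul_zero],
    ← two_mul_sum_range_sub_mul_choose]
  congr 1
  refine sum_congr rfl fun t _ => ?_
  rw [show ((j + t : ℕ) : ℤ) - j = t by push_cast; ring, intChoose_natCast]
  push_cast
  ring

theorem sum_range_two_mul_eq_two_mul_sum {M : Type*} [AddCommMonoid M] {f : ℕ → M} {r : ℕ}
    (hf : ∀ j < r, f (2 * r - 1 - j) = f j) :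
    ∑ j ∈ range (2 * r), f j = 2 • ∑ j ∈ range r, f j := by
  rw [two_mul, sum_range_add, two_nsmul, ← sum_range_reflect (fun t => f (r + t))]
  congr 1
  refine sum_congr rfl fun j hj => ?_
  have hjr := mem_range.1 hj
  rw [← hf j hjr, show r + (r - 1 - j) = 2 * r - 1 - j by omega]

/-- The coefficient of `x ^ j` in the polynomial `P` of degree `m` with
`(n - x d/dx) ^ m (1 + x) ^ (2 n) = (1 + x) ^ (2 n - m) P`. -/
def momentCoeff (n : ℕ) : ℕ → ℤ → ℤ
  | 0, j => if j = 0 then 1 else 0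
  | m + 1, j => (n - j) * momentCoeff n m j + (m + 1 - n - j) * momentCoeff n m (j - 1)

namespace momentCoeff

variable (n : ℕ)

theorem eq_zero_of_neg (m : ℕ) {j : ℤ} (hj : j < 0) : momentCoeff n m j = 0 := by
  induction m generalizing j with
  | zero => simp [momentCoeff, hj.ne]
  | succ m ih => simp [momentCoeff, ih hj, ih (show j - 1 < 0 by omega)]

theorem eq_zero_of_lt (m : ℕ) {j : ℤ} (hj : m < j) : momentCoeff n m j = 0 := by
  induction m generalizing j with
  | zero => rw [momentCoeff, if_neg (by omega)]
  | succ m ih =>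
    push_cast at hj
    simp [momentCoeff, ih (show (m : ℤ) < j by omega), ih (show (m : ℤ) < j - 1 by omega)]

theorem reflect (m : ℕ) (j : ℤ) : momentCoeff n m (m - j) = (-1) ^ m * momentCoeff n m j := by
  induction m generalizing j with
  | zero =>
    by_cases hj : j = 0 <;> simp [momentCoeff, hj]
  | succ m ih =>
    simp only [momentCoeff]
    push_cast
    rw [show (m : ℤ) + 1 - j - 1 = m - j by ring, show (m : ℤ) + 1 - j = m - (j - 1) by ring,
      ih j, ih (j - 1)]
    ring

theorem sum_succ_mul_intChoose {m N : ℕ} (h : m + 1 + N = 2 * n) (i : ℤ) :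
    ∑ j ∈ range (m + 2), momentCoeff n (m + 1) j * intChoose N (i - j)
      = ∑ j ∈ range (m + 1), momentCoeff n m j * ((n - i) * intChoose (N + 1 : ℕ) (i - j)) := by
  have hterm (j : ℕ) : momentCoeff n m j * ((n - i) * intChoose (N + 1 : ℕ) (i - j))
      = (n - j) * momentCoeff n m j * intChoose N (i - j)
        + (m + 1 - n - (j + 1 : ℕ)) * momentCoeff n m j * intChoose N (i - (j + 1 : ℕ)) := by
    have key := sub_mul_intChoose_add_one_left N (n - j) (i - j)
    rw [show (n : ℤ) - j - (i - j) = n - i by ring,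
      show (n : ℤ) - j - (N + 1) = m + 1 - n - (j + 1 : ℕ) by push_cast; omega,
      show i - j - 1 = i - (j + 1 : ℕ) by push_cast; ring] at key
    rw [Nat.cast_succ N]
    linear_combination momentCoeff n m j * key
  simp only [momentCoeff, add_mul, sum_add_distrib, hterm]
  congr 1
  · rw [sum_range_succ, eq_zero_of_lt n m (show (m : ℤ) < (m + 1 : ℕ) by omega), mul_zero,
      zero_mul, add_zero]
  · rw [sum_range_succ', Nat.cast_zero, zero_sub, eq_zero_of_neg n m (show (-1 : ℤ) < 0 by omega),
      mul_zero, zero_mul, add_zero]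
    simp only [Nat.cast_succ, add_sub_cancel_right]

theorem choose_mul_pow_eq_sum {m N : ℕ} (h : m + N = 2 * n) (i : ℕ) :
    ((2 * n).choose i : ℤ) * (n - i) ^ m
      = ∑ j ∈ range (m + 1), momentCoeff n m j * intChoose N (i - j) := by
  induction m generalizing N with
  | zero => simp [momentCoeff, ← h, Ring.choose_natCast]
  | succ m ih =>
    rw [sum_succ_mul_intChoose n (by omega : m + 1 + N = 2 * n), pow_succ, ← mul_assoc,
      ih (by omega : m + (N + 1) = 2 * n), sum_mul]
    exact sum_congr rfl fun j _ => by ring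

theorem sum_range_two_mul_mul_sub (n r : ℕ) :
    ∑ j ∈ range (2 * r), momentCoeff n (2 * r - 1) j * (2 * ((r : ℤ) - j) - 1)
      = 2 * ∑ j ∈ range r, momentCoeff n (2 * r - 1) j * (2 * ((r : ℤ) - j) - 1) := by
  rcases Nat.eq_zero_or_pos r with rfl | hr
  · simp
  rw [sum_range_two_mul_eq_two_mul_sum fun j hj => ?_, two_nsmul, ← two_mul]
  rw [Nat.cast_sub (by omega), reflect,
    Odd.neg_one_pow ⟨r - 1, by omega⟩, Nat.cast_sub (by omega)]
  push_cast [Nat.cast_sub (show 1 ≤ 2 * r by omega)]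
  ring

end momentCoeff

/-- For `c = 1, 2` this is `U_{2s+c-1}(1) / 2 ^ (c - 1)` for the Chebyshev polynomial `U` of the
second kind, by its explicit formula and `C(2m - 2s - c, m) = (-1) ^ m C(2s + c - 1 - m, m)`. -/
def chebyshevSum (s : ℕ) (c : ℤ) : ℤ :=
  ∑ m ∈ range (s + 1), 4 ^ (s - m) * intChoose (2 * m - 2 * s - c) m

theorem chebyshevSum_succ (s : ℕ) (c : ℤ) :
    chebyshevSum (s + 1) c = 4 * chebyshevSum s (c + 2) + intChoose (-c) (s + 1 : ℕ) := by
  rw [chebyshevSum, sum_range_succ, chebyshevSum, mul_sum, Nat.sub_self, pow_zero, one_mul,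
    show 2 * ((s + 1 : ℕ) : ℤ) - 2 * (s + 1 : ℕ) - c = -c by ring]
  congr 1
  refine sum_congr rfl fun m hm => ?_
  rw [show s + 1 - m = s - m + 1 by have := mem_range.1 hm; omega, pow_succ]
  push_cast
  ring_nf

theorem chebyshevSum_pascal (s : ℕ) (c : ℤ) :
    chebyshevSum (s + 1) c = chebyshevSum (s + 1) (c + 1) + chebyshevSum s (c + 1) := by
  have hterm (m : ℕ) : intChoose (2 * m - 2 * (s + 1 : ℕ) - c) m
      = intChoose (2 * m - 2 * (s + 1 : ℕ) - (c + 1)) m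
        + intChoose (2 * m - 2 * (s + 1 : ℕ) - (c + 1)) (m - 1) := by
    rw [← intChoose_add_one_left]
    ring_nf
  simp only [chebyshevSum, hterm, mul_add, sum_add_distrib]
  congr 1
  rw [sum_range_succ', Nat.cast_zero, zero_sub, intChoose_of_neg _ (show (-1 : ℤ) < 0 by omega),
    mul_zero, add_zero]
  refine sum_congr rfl fun m _ => ?_
  push_cast
  ring_nf

theorem chebyshevSum_one_and_two (s : ℕ) :
    chebyshevSum s 1 = 2 * s + 1 ∧ chebyshevSum s 2 = s + 1 := by
  induction s with
  | zero => simp [chebyshevSum]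
  | succ s ih =>
    have h₁ := chebyshevSum_pascal s 0
    have h₂ := chebyshevSum_pascal s 1
    rw [chebyshevSum_succ, neg_zero, intChoose_natCast_right, Ring.choose_zero_succ] at h₁
    norm_num at h₁ h₂
    constructor <;> push_cast <;> linarith [ih.1, ih.2]

theorem sum_range_four_pow_mul_intChoose (r j : ℕ) :
    ∑ k ∈ range r, (4 : ℤ) ^ (r - 1 - k) * intChoose (2 * k - 2 * r + 1) (k - j)
      = if j < r then 2 * (r - j : ℤ) - 1 else 0 := by
  split_ifs with hj
  · obtain ⟨s, rfl⟩ : ∃ s, r = j + (s + 1) := ⟨r - j - 1, by omega⟩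
    rw [sum_range_eq_sum_range_sub_of_eq_zero (j := j)
        fun k hk => by rw [intChoose_of_neg _ (by omega), mul_zero],
      Nat.add_sub_cancel_left]
    have h := (chebyshevSum_one_and_two s).1
    rw [chebyshevSum] at h
    convert h using 1
    · refine sum_congr rfl fun m hm => ?_
      rw [show j + (s + 1) - 1 - (j + m) = s - m by omega]
      push_cast
      ring_nf
    · push_cast
      ring
  · exact sum_eq_zero fun k hk => by
      rw [intChoose_of_neg _ (by simp at hk; omega), mul_zero]

theorem sum_range_choose_mul_pow_eq_two_mul_sum_Icc (n : ℕ) {r : ℕ} (hr : r ≠ 0) :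
    ∑ i ∈ range (2 * n + 1), ((2 * n).choose i : ℤ) * ((n : ℤ) - i) ^ (2 * r)
      = 2 * ∑ k ∈ Icc 1 n, ((2 * n).choose (n - k) : ℤ) * (k : ℤ) ^ (2 * r) := by
  have hIcc : ∑ k ∈ Icc 1 n, ((2 * n).choose (n - k) : ℤ) * (k : ℤ) ^ (2 * r)
      = ∑ t ∈ range n, ((2 * n).choose (n - (t + 1)) : ℤ) * ((t + 1 : ℕ) : ℤ) ^ (2 * r) := by
    rw [← Ico_add_one_right_eq_Icc, sum_Ico_eq_sum_range, Nat.add_sub_cancel]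
    exact sum_congr rfl fun t _ => by rw [add_comm 1 t]
  have hlow : ∑ i ∈ range n, ((2 * n).choose i : ℤ) * ((n : ℤ) - i) ^ (2 * r)
      = ∑ t ∈ range n, ((2 * n).choose (n - (t + 1)) : ℤ) * ((t + 1 : ℕ) : ℤ) ^ (2 * r) := by
    rw [← sum_range_reflect]
    refine sum_congr rfl fun t ht => ?_
    have htn := mem_range.1 ht
    rw [show n - 1 - t = n - (t + 1) by omega, Nat.cast_sub (by omega)]
    ring_nf
  have hhigh (t : ℕ) (ht : t ∈ range n) :
      ((2 * n).choose (n + 1 + t) : ℤ) * ((n : ℤ) - (n + 1 + t : ℕ)) ^ (2 * r)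
        = ((2 * n).choose (n - (t + 1)) : ℤ) * ((t + 1 : ℕ) : ℤ) ^ (2 * r) := by
    have htn := mem_range.1 ht
    rw [Nat.choose_symm_of_eq_add (show 2 * n = n + 1 + t + (n - (t + 1)) by omega),
      show (n : ℤ) - (n + 1 + t : ℕ) = -((t + 1 : ℕ) : ℤ) by push_cast; ring,
      Even.neg_pow (even_two_mul r)]
  rw [show 2 * n + 1 = n + 1 + n by ring, sum_range_add, sum_range_succ, sum_congr rfl hhigh,
    sub_self, zero_pow (by omega), mul_zero, add_zero, hlow, hIcc]
  ring

theorem two_mul_sum_choose_mul_pow_succ (n : ℕ) {m N : ℕ} (h : m + N = 2 * n) :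
    2 * ∑ i ∈ range (2 * n + 1), ((2 * n).choose i : ℤ) * ((n : ℤ) - i) ^ (m + 1)
      = 2 ^ N * ∑ j ∈ range (m + 1), momentCoeff n m j * (2 * ((n : ℤ) - j) - N) := by
  have hexpand (i : ℕ) : ((2 * n).choose i : ℤ) * ((n : ℤ) - i) ^ (m + 1)
      = ∑ j ∈ range (m + 1), momentCoeff n m j * ((n - i) * intChoose N (i - j)) := by
    rw [pow_succ, ← mul_assoc, momentCoeff.choose_mul_pow_eq_sum n h, sum_mul]
    exact sum_congr rfl fun j _ => by ring
  simp only [hexpand]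
  rw [sum_comm, mul_sum, mul_sum]
  refine sum_congr rfl fun j hj => ?_
  rw [← mul_sum, mul_left_comm, two_mul_sum_range_sub_mul_intChoose _
    (show j + N ≤ 2 * n by have := mem_range.1 hj; omega)]
  ring

theorem sum_choose_mul_ringChoose_mul_pow (n : ℕ) {m N : ℕ} (h : m + N = 2 * n) (a : ℤ) (k : ℕ) :
    ∑ i ∈ range (k + 1), ((2 * n).choose i : ℤ) * Ring.choose a (k - i) * ((n : ℤ) - i) ^ m
      = ∑ j ∈ range (m + 1), momentCoeff n m j * intChoose (N + a) (k - j) := by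
  have hexpand (i : ℕ) (hi : i ∈ range (k + 1)) :
      ((2 * n).choose i : ℤ) * Ring.choose a (k - i) * ((n : ℤ) - i) ^ m
        = ∑ j ∈ range (m + 1), momentCoeff n m j * (intChoose N (i - j) * intChoose a (k - i)) := by
    rw [← Nat.cast_sub (Nat.lt_succ_iff.1 (mem_range.1 hi)), ← intChoose_natCast_right,
      mul_right_comm, momentCoeff.choose_mul_pow_eq_sum n h, sum_mul]
    exact sum_congr rfl fun j _ => by ring
  rw [sum_congr rfl hexpand, sum_comm]
  exact sum_congr rfl fun j _ => by rw [← mul_sum, sum_range_intChoose_mul_intChoose]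

theorem four_mul_sum_Icc_choose_mul_pow {n r : ℕ} (hr : 1 ≤ r) (hrn : r ≤ n) :
    4 * ∑ k ∈ Icc 1 n, ((2 * n).choose (n - k) : ℤ) * (k : ℤ) ^ (2 * r)
      = 4 ^ (n - r + 1) * ∑ j ∈ range r, momentCoeff n (2 * r - 1) j * (2 * ((r : ℤ) - j) - 1) := by
  have hN : 2 * r - 1 + (2 * (n - r) + 1) = 2 * n := by omega
  have hpow := two_mul_sum_choose_mul_pow_succ n hN
  rw [Nat.sub_add_cancel (by omega), sum_range_choose_mul_pow_eq_two_mul_sum_Icc n (by omega)]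
    at hpow
  calc 4 * ∑ k ∈ Icc 1 n, ((2 * n).choose (n - k) : ℤ) * (k : ℤ) ^ (2 * r)
      = 2 ^ (2 * (n - r) + 1) * ∑ j ∈ range (2 * r), momentCoeff n (2 * r - 1) j
          * (2 * ((r : ℤ) - j) - 1) := by
        rw [show (4 : ℤ) = 2 * 2 by norm_num, mul_assoc, hpow]
        congr 1
        refine sum_congr rfl fun j _ => ?_
        push_cast [Nat.cast_sub hrn]
        ring
    _ = _ := by
        rw [momentCoeff.sum_range_two_mul_mul_sub, ← mul_assoc, ← pow_succ,
          show 2 * (n - r) + 1 + 1 = 2 * (n - r + 1) by ring, pow_mul]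
        norm_num

theorem sum_four_pow_mul_sum_choose_mul_ringChoose_mul_pow {n r : ℕ} (hr : 1 ≤ r) (hrn : r ≤ n) :
    ∑ k ∈ range r, (4 : ℤ) ^ (n - k - 1) * ∑ i ∈ range (k + 1),
        ((2 * n).choose i : ℤ) * Ring.choose ((2 * k : ℤ) - 2 * n) (k - i) *
          ((n : ℤ) - i) ^ (2 * r - 1)
      = 4 ^ (n - r) * ∑ j ∈ range r, momentCoeff n (2 * r - 1) j * (2 * ((r : ℤ) - j) - 1) := by
  have hN : 2 * r - 1 + (2 * (n - r) + 1) = 2 * n := by omega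
  have hinner (j : ℕ) : ∑ k ∈ range r, 4 ^ (n - k - 1) * (momentCoeff n (2 * r - 1) j
        * intChoose ((2 * (n - r) + 1 : ℕ) + (2 * k - 2 * n)) (k - j))
      = 4 ^ (n - r) * (momentCoeff n (2 * r - 1) j
        * if j < r then 2 * ((r : ℤ) - j) - 1 else 0) := by
    rw [← sum_range_four_pow_mul_intChoose, mul_sum, mul_sum]
    refine sum_congr rfl fun k hk => ?_
    have hkr := mem_range.1 hk
    rw [show n - k - 1 = (n - r) + (r - 1 - k) by omega, pow_add,
      show ((2 * (n - r) + 1 : ℕ) : ℤ) + (2 * k - 2 * n) = 2 * k - 2 * r + 1 by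
        push_cast [Nat.cast_sub hrn]; ring]
    ring
  simp only [sum_choose_mul_ringChoose_mul_pow n hN, Nat.sub_add_cancel (by omega : 1 ≤ 2 * r),
    mul_sum]
  rw [sum_comm, sum_congr rfl fun j _ => hinner j,
    ← sum_range_add_sum_Ico _ (show r ≤ 2 * r by omega),
    sum_eq_zero (s := Ico r (2 * r)) fun j hj => by
      rw [if_neg (by simp at hj; omega), mul_zero, mul_zero],
    add_zero]
  exact sum_congr rfl fun j hj => by rw [if_pos (mem_range.1 hj)]

theorem even_powers_sum_general (n r : ℕ) (hr1 : 1 ≤ r) (hrn : r ≤ n) :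
    (∑ k ∈ Finset.Icc 1 n, ((2 * n).choose (n - k) : ℤ) * (k : ℤ) ^ (2 * r))
      = ∑ k ∈ Finset.range r, (4 : ℤ) ^ (n - k - 1) *
          ∑ i ∈ Finset.range (k + 1),
            ((2 * n).choose i : ℤ) * Ring.choose ((2 * k : ℤ) - 2 * n) (k - i) *
              ((n : ℤ) - i) ^ (2 * r - 1) := by
  refine mul_left_cancel₀ (four_ne_zero (α := ℤ)) ?_
  rw [four_mul_sum_Icc_choose_mul_pow hr1 hrn,
    sum_four_pow_mul_sum_choose_mul_ringChoose_mul_pow hr1 hrn, ← mul_assoc, ← pow_succ']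

theorem even_powers_sum (n r : ℕ) (hn : 1 ≤ n) (hr1 : 1 ≤ r) (hrn : r ≤ n) :
    (∑ k ∈ Finset.Icc 1 n, ((2 * n).choose (n - k) : ℤ) * (k : ℤ) ^ (2 * r))
      = ∑ k ∈ Finset.range r, (4 : ℤ) ^ (n - k - 1) *
          ∑ i ∈ Finset.range (k + 1),
            ((2 * n).choose i : ℤ) * Ring.choose ((2 * k : ℤ) - 2 * n) (k - i) *
              ((n : ℤ) - i) ^ (2 * r - 1) :=
  even_powers_sum_general n r hr1 hrn
end

section
/- For every integer n ≥ 1, the following identity holds in the polynomial ring ℤ[q]: (1 + q^n) · Σ_{k=1}^{n} (1 - q^k) · [2n choose n-k]_q · q^{k(k-1)/2} = (1 - q^n) · [2n choose n]_q. Equivalently, Σ_{k=1}^{n} ((1-q^k)/(1-q^n)) [2n choose n-k]_q q^{binom(k,2)} = [2n choose n]_q / (1+q^n). -/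
/-!
Writing `c k = [2n choose n-k]_q`, the Pascal-type recurrence
`(1 - q^(n-k)) c k = (1 - q^(n+k+1)) c (k+1)` shows that the `k`-th summand, multiplied by
`1 + q^n`, equals `F (k-1) - F k` with `F k = q^(k choose 2) (q^k - q^n) c k`.
The sum therefore telescopes to `F 0 - F n = (1 - q^n) c 0`.
-/

open Finset Polynomial

theorem Polynomial.one_sub_X_pow_ne_zero {R : Type*} [CommRing R] [Nontrivial R] {m : ℕ}
    (hm : m ≠ 0) : (1 - X ^ m : R[X]) ≠ 0 := by
  rw [← neg_ne_zero, neg_sub, ← C_1]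
  exact X_pow_sub_C_ne_zero (Nat.pos_of_ne_zero hm) 1

def IsGaussianBinomial {R : Type*} [CommRing R] (B : ℕ → ℕ → R[X]) : Prop :=
  ∀ M N : ℕ, N ≤ M →
    (∏ i ∈ range N, (1 - (X : R[X]) ^ (i + 1))) * B M N
      = ∏ i ∈ range N, (1 - (X : R[X]) ^ (M - N + i + 1))

theorem IsGaussianBinomial.one_sub_X_pow_mul_succ {R : Type*} [CommRing R] [IsDomain R]
    {B : ℕ → ℕ → R[X]} (hB : IsGaussianBinomial B) {M m : ℕ} (hm : m < M) :
    (1 - X ^ (m + 1)) * B M (m + 1) = (1 - X ^ (M - m)) * B M m := by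
  have hsucc := hB M (m + 1) hm
  have hprod : ∏ i ∈ range (m + 1), (1 - (X : R[X]) ^ (M - (m + 1) + i + 1))
      = (∏ i ∈ range m, (1 - (X : R[X]) ^ (M - m + i + 1))) * (1 - X ^ (M - m)) := by
    rw [prod_range_succ']
    congr 1
    · exact prod_congr rfl fun i _ => by congr 2; omega
    · congr 2; omega
  rw [prod_range_succ, hprod, ← hB M m hm.le] at hsucc
  have hP : ∏ i ∈ range m, (1 - (X : R[X]) ^ (i + 1)) ≠ 0 :=
    prod_ne_zero_iff.mpr fun i _ => one_sub_X_pow_ne_zero i.succ_ne_zero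
  apply mul_left_cancel₀ hP
  linear_combination hsucc

theorem one_add_pow_mul_sum_eq_of_recurrence {A : Type*} [CommRing A] (q : A) (c : ℕ → A)
    (n : ℕ) (hc : ∀ k < n, (1 - q ^ (n - k)) * c k = (1 - q ^ (n + k + 1)) * c (k + 1)) :
    (1 + q ^ n) * ∑ k ∈ Icc 1 n, (1 - q ^ k) * c k * q ^ k.choose 2 = (1 - q ^ n) * c 0 := by
  set F : ℕ → A := fun k => q ^ k.choose 2 * (q ^ k - q ^ n) * c k with hF
  have hstep : ∀ k < n,
      (1 + q ^ n) * ((1 - q ^ (k + 1)) * c (k + 1) * q ^ (k + 1).choose 2) = F k - F (k + 1) := by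
    intro k hk
    -- `q^k - q^n = q^k (1 - q^(n-k))` lets the recurrence rewrite `F k` in terms of `c (k+1)`.
    have hFk : F k = q ^ (k + 1).choose 2 * ((1 - q ^ (n + k + 1)) * c (k + 1)) := by
      rw [hF, ← hc k hk, Nat.choose_succ_succ', Nat.choose_one_right, pow_add,
        show q ^ n = q ^ k * q ^ (n - k) by rw [← pow_add, Nat.add_sub_cancel' hk.le]]
      ring
    rw [hFk, hF]
    ring
  rw [← Ico_add_one_right_eq_Icc, sum_Ico_eq_sum_range, Nat.add_sub_cancel, mul_sum]
  simp_rw [add_comm 1]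
  rw [sum_congr rfl fun k hk => hstep k (mem_range.mp hk), sum_range_sub']
  simp [hF]

theorem q_shapiro_identity_general (B : ℕ → ℕ → Polynomial ℤ)
    (hB : ∀ M N : ℕ, N ≤ M →
      (∏ i ∈ Finset.range N, (1 - (X : Polynomial ℤ) ^ (i + 1))) * B M N
        = ∏ i ∈ Finset.range N, (1 - (X : Polynomial ℤ) ^ (M - N + i + 1)))
    (n : ℕ) :
    (1 + (X : Polynomial ℤ) ^ n) *
        ∑ k ∈ Finset.Icc 1 n,
          (1 - (X : Polynomial ℤ) ^ k) * B (2 * n) (n - k) * (X : Polynomial ℤ) ^ (k * (k - 1) / 2)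
      = (1 - (X : Polynomial ℤ) ^ n) * B (2 * n) n := by
  have hrec : ∀ k < n, (1 - (X : ℤ[X]) ^ (n - k)) * B (2 * n) (n - k)
      = (1 - X ^ (n + k + 1)) * B (2 * n) (n - (k + 1)) := by
    intro k hk
    have h := IsGaussianBinomial.one_sub_X_pow_mul_succ hB (M := 2 * n) (m := n - (k + 1)) (by omega)
    rwa [show n - (k + 1) + 1 = n - k by omega, show 2 * n - (n - (k + 1)) = n + k + 1 by omega] at h
  simp_rw [← Nat.choose_two_right]
  simpa using one_add_pow_mul_sum_eq_of_recurrence X (fun k => B (2 * n) (n - k)) n hrec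

/-- For every integer `n ≥ 1`, the identity
`(1 + q^n) · Σ_{k=1}^{n} (1 - q^k) · [2n choose n-k]_q · q^{k(k-1)/2} = (1 - q^n) · [2n choose n]_q`
holds in `ℤ[q]`.  Here the Gaussian binomial coefficients are encoded by any family
`B : ℕ → ℕ → ℤ[q]` satisfying, for `N ≤ M`, the defining product relation
`(Π_{i=1}^{N} (1 - q^i)) · B M N = Π_{i=1}^{N} (1 - q^{M-N+i})`,
which determines `B M N` uniquely (ℤ[q] being an integral domain). -/
theorem q_shapiro_identity (B : ℕ → ℕ → Polynomial ℤ)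
    (hB : ∀ M N : ℕ, N ≤ M →
      (∏ i ∈ Finset.range N, (1 - (X : Polynomial ℤ) ^ (i + 1))) * B M N
        = ∏ i ∈ Finset.range N, (1 - (X : Polynomial ℤ) ^ (M - N + i + 1)))
    (n : ℕ) (hn : 1 ≤ n) :
    (1 + (X : Polynomial ℤ) ^ n) *
        ∑ k ∈ Finset.Icc 1 n,
          (1 - (X : Polynomial ℤ) ^ k) * B (2 * n) (n - k) * (X : Polynomial ℤ) ^ (k * (k - 1) / 2)
      = (1 - (X : Polynomial ℤ) ^ n) * B (2 * n) n :=
  q_shapiro_identity_general B hB n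
end
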